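/- arXiv:2201.03975 — 8 statements merged into one kernel-verified Lean document; each statement's English description precedes it below -/
import Mathlib

section
/- Let a, b > 0 and let S be a segment whose discrete bounding rectangle has normalized dimensions i, j with i ≥ 1 and j ≥ 1. Then the number of tiles of the a×b grid visited by S is at most i + j − 1. -/
open Set

/-- Interior of the tile `T(k,l)` of the `a×b` grid. -/
noncomputable def tileInt (a b : ℝ) (k l : ℤ) : Set (ℝ × ℝ) :=
  Set.Ioo ((k : ℝ) * a) (((k : ℝ) + 1) * a) ×ˢ Set.Ioo ((l : ℝ) * b) (((l : ℝ) + 1) * b)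

/-- Number of tiles of the `a×b` grid visited by the closed segment with endpoints `p`, `q`. -/
noncomputable def visitCount (a b : ℝ) (p q : ℝ × ℝ) : ℕ :=
  Set.ncard {kl : ℤ × ℤ | (segment ℝ p q ∩ tileInt a b kl.1 kl.2).Nonempty}

/-- Normalized width of the discrete bounding rectangle of the segment with endpoints `p`, `q`. -/
noncomputable def normWidth (a : ℝ) (p q : ℝ × ℝ) : ℤ :=
  ⌈max p.1 q.1 / a⌉ - ⌊min p.1 q.1 / a⌋

/-- Normalized height of the discrete bounding rectangle of the segment with endpoints `p`, `q`. -/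
noncomputable def normHeight (b : ℝ) (p q : ℝ × ℝ) : ℤ :=
  ⌈max p.2 q.2 / b⌉ - ⌊min p.2 q.2 / b⌋

/-- Euclidean length of the segment with endpoints `p`, `q`. -/
noncomputable def segLen (p q : ℝ × ℝ) : ℝ :=
  Real.sqrt ((p.1 - q.1) ^ 2 + (p.2 - q.2) ^ 2)

/-- `maxTiles a b ℓ` : maximum number of tiles of the `a×b` grid visited by a segment of length `ℓ`. -/
noncomputable def maxTiles (a b ℓ : ℝ) : ℕ :=
  sSup {n : ℕ | ∃ p q : ℝ × ℝ, segLen p q = ℓ ∧ visitCount a b p q = n}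

/-- `infLen a b N` : infimum of lengths of segments visiting at least `N` tiles of the `a×b` grid. -/
noncomputable def infLen (a b : ℝ) (N : ℕ) : ℝ :=
  sInf {ℓ : ℝ | 0 < ℓ ∧ ∃ p q : ℝ × ℝ, segLen p q = ℓ ∧ N ≤ visitCount a b p q}

/-- `minIntLen N` : minimum positive integer length of a segment visiting at least `N` tiles
of the unit square grid. -/
noncomputable def minIntLen (N : ℕ) : ℕ :=
  sInf {L : ℕ | 1 ≤ L ∧ ∃ p q : ℝ × ℝ, segLen p q = (L : ℝ) ∧ N ≤ visitCount 1 1 p q}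

lemma seg_coord1 (p q z : ℝ × ℝ) (hz : z ∈ segment ℝ p q) : z.1 ∈ segment ℝ p.1 q.1 := by
  obtain ⟨u, v, hu, hv, huv, hz⟩ := hz
  exact ⟨u, v, hu, hv, huv, by rw [← hz]; simp [smul_eq_mul]⟩

lemma seg_coord2 (p q z : ℝ × ℝ) (hz : z ∈ segment ℝ p q) : z.2 ∈ segment ℝ p.2 q.2 := by
  obtain ⟨u, v, hu, hv, huv, hz⟩ := hz
  exact ⟨u, v, hu, hv, huv, by rw [← hz]; simp [smul_eq_mul]⟩

lemma seg_bounds (p q z : ℝ × ℝ) (hz : z ∈ segment ℝ p q) :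
    min p.1 q.1 ≤ z.1 ∧ z.1 ≤ max p.1 q.1 ∧ min p.2 q.2 ≤ z.2 ∧ z.2 ≤ max p.2 q.2 := by
  have h1 := seg_coord1 p q z hz
  have h2 := seg_coord2 p q z hz
  rw [segment_eq_Icc' , Set.mem_Icc] at h1 h2
  exact ⟨h1.1, h1.2, h2.1, h2.2⟩

lemma seg_prod (p q z z' : ℝ × ℝ) (hz : z ∈ segment ℝ p q) (hz' : z' ∈ segment ℝ p q) :
    ∃ c : ℝ, 0 ≤ c ∧ (z'.1 - z.1) * (z'.2 - z.2) = c * ((q.1 - p.1) * (q.2 - p.2)) := by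
  obtain ⟨u, v, hu, hv, huv, hz⟩ := hz
  obtain ⟨u', v', hu', hv', huv', hz'⟩ := hz'
  refine ⟨(v' - v) ^ 2, sq_nonneg _, ?_⟩
  have h1 : z.1 = u * p.1 + v * q.1 := by rw [← hz]; simp [smul_eq_mul]
  have h2 : z.2 = u * p.2 + v * q.2 := by rw [← hz]; simp [smul_eq_mul]
  have h3 : z'.1 = u' * p.1 + v' * q.1 := by rw [← hz']; simp [smul_eq_mul]
  have h4 : z'.2 = u' * p.2 + v' * q.2 := by rw [← hz']; simp [smul_eq_mul]
  have hu1 : u = 1 - v := by linarith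
  have hu2 : u' = 1 - v' := by linarith
  rw [h1, h2, h3, h4, hu1, hu2]; ring

theorem stmt_0 (a b : ℝ) (ha : 0 < a) (hb : 0 < b) (p q : ℝ × ℝ)
    (hi : 1 ≤ normWidth a p q) (hj : 1 ≤ normHeight b p q) :
    (visitCount a b p q : ℤ) ≤ normWidth a p q + normHeight b p q - 1 := by
  set m := ⌊min p.1 q.1 / a⌋ with hm
  set M := ⌈max p.1 q.1 / a⌉ with hM
  set n := ⌊min p.2 q.2 / b⌋ with hn
  set N := ⌈max p.2 q.2 / b⌉ with hN
  have hiM : normWidth a p q = M - m := rfl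
  have hjN : normHeight b p q = N - n := rfl
  rw [hiM] at hi; rw [hjN] at hj
  set V : Set (ℤ × ℤ) := {kl : ℤ × ℤ | (segment ℝ p q ∩ tileInt a b kl.1 kl.2).Nonempty} with hV
  have hvc : visitCount a b p q = V.ncard := rfl
  -- bounds on visited tiles
  have hbound : ∀ kl ∈ V, m ≤ kl.1 ∧ kl.1 ≤ M - 1 ∧ n ≤ kl.2 ∧ kl.2 ≤ N - 1 := by
    rintro ⟨k, l⟩ ⟨z, hzseg, hztile⟩
    obtain ⟨hx1, hx2, hy1, hy2⟩ := seg_bounds p q z hzseg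
    simp only [tileInt, Set.mem_prod, Set.mem_Ioo] at hztile
    obtain ⟨⟨hxl, hxr⟩, ⟨hyl, hyr⟩⟩ := hztile
    refine ⟨?_, ?_, ?_, ?_⟩
    · have h1 : (m : ℝ) ≤ min p.1 q.1 / a := Int.floor_le _
      have h2 : min p.1 q.1 / a < (k : ℝ) + 1 := (div_lt_iff₀ ha).2 (by linarith)
      have : (m : ℝ) < (k : ℝ) + 1 := lt_of_le_of_lt h1 h2
      have : m < k + 1 := by exact_mod_cast this
      omega
    · have h1 : (k : ℝ) < max p.1 q.1 / a := (lt_div_iff₀ ha).2 (by linarith)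
      have h2 : max p.1 q.1 / a ≤ (M : ℝ) := Int.le_ceil _
      have : (k : ℝ) < (M : ℝ) := lt_of_lt_of_le h1 h2
      have : k < M := by exact_mod_cast this
      omega
    · have h1 : (n : ℝ) ≤ min p.2 q.2 / b := Int.floor_le _
      have h2 : min p.2 q.2 / b < (l : ℝ) + 1 := (div_lt_iff₀ hb).2 (by linarith)
      have : (n : ℝ) < (l : ℝ) + 1 := lt_of_le_of_lt h1 h2
      have : n < l + 1 := by exact_mod_cast this
      omega
    · have h1 : (l : ℝ) < max p.2 q.2 / b := (lt_div_iff₀ hb).2 (by linarith)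
      have h2 : max p.2 q.2 / b ≤ (N : ℝ) := Int.le_ceil _
      have : (l : ℝ) < (N : ℝ) := lt_of_lt_of_le h1 h2
      have : l < N := by exact_mod_cast this
      omega
  rw [hvc, hiM, hjN]
  by_cases hD : 0 ≤ (q.1 - p.1) * (q.2 - p.2)
  · -- diagonal sum k + l is injective on V
    have key : ∀ k l k' l' : ℤ, (k, l) ∈ V → (k', l') ∈ V → k < k' → l' < l → False := by
      rintro k l k' l' ⟨z, hz, hzt⟩ ⟨z', hz', hzt'⟩ hkk hll
      simp only [tileInt, Set.mem_prod, Set.mem_Ioo] at hzt hzt'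
      obtain ⟨c, hc, hprod⟩ := seg_prod p q z z' hz hz'
      have e1 : ((k : ℝ) + 1) ≤ (k' : ℝ) := by exact_mod_cast hkk
      have e2 : ((l' : ℝ) + 1) ≤ (l : ℝ) := by exact_mod_cast hll
      have h1 : z.1 < z'.1 := by nlinarith [hzt.1.2, hzt'.1.1]
      have h2 : z'.2 < z.2 := by nlinarith [hzt.2.1, hzt'.2.2]
      nlinarith [mul_nonneg hc hD, mul_pos (sub_pos.2 h1) (sub_pos.2 h2)]
    have hinj : Set.InjOn (fun kl : ℤ × ℤ => kl.1 + kl.2) V := by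
      rintro ⟨k, l⟩ hkl ⟨k', l'⟩ hkl' hsum
      simp only [Prod.mk.injEq]
      simp only at hsum
      rcases lt_trichotomy k k' with h | h | h
      · exact absurd (key k l k' l' hkl hkl' h (by omega)) (by simp)
      · exact ⟨h, by omega⟩
      · exact absurd (key k' l' k l hkl' hkl h (by omega)) (by simp)
    have himg : (fun kl : ℤ × ℤ => kl.1 + kl.2) '' V ⊆ ↑(Finset.Icc (m + n) (M + N - 2)) := by
      rintro x ⟨⟨k, l⟩, hkl, rfl⟩
      obtain ⟨h1, h2, h3, h4⟩ := hbound _ hkl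
      simp only [Finset.coe_Icc, Set.mem_Icc]
      omega
    have hcard : V.ncard ≤ (M + N - 2 + 1 - (m + n)).toNat := by
      rw [← Set.ncard_image_of_injOn hinj]
      calc ((fun kl : ℤ × ℤ => kl.1 + kl.2) '' V).ncard
          ≤ (↑(Finset.Icc (m + n) (M + N - 2)) : Set ℤ).ncard :=
            Set.ncard_le_ncard himg (Finset.finite_toSet _)
        _ = _ := by rw [Set.ncard_coe_finset, Int.card_Icc]
    have hpos : (0 : ℤ) ≤ M + N - 2 + 1 - (m + n) := by omega
    have : (V.ncard : ℤ) ≤ ((M + N - 2 + 1 - (m + n)).toNat : ℤ) := by exact_mod_cast hcard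
    rw [Int.toNat_of_nonneg hpos] at this
    omega
  · push_neg at hD
    have key : ∀ k l k' l' : ℤ, (k, l) ∈ V → (k', l') ∈ V → k < k' → l < l' → False := by
      rintro k l k' l' ⟨z, hz, hzt⟩ ⟨z', hz', hzt'⟩ hkk hll
      simp only [tileInt, Set.mem_prod, Set.mem_Ioo] at hzt hzt'
      obtain ⟨c, hc, hprod⟩ := seg_prod p q z z' hz hz'
      have e1 : ((k : ℝ) + 1) ≤ (k' : ℝ) := by exact_mod_cast hkk
      have e2 : ((l : ℝ) + 1) ≤ (l' : ℝ) := by exact_mod_cast hll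
      have h1 : z.1 < z'.1 := by nlinarith [hzt.1.2, hzt'.1.1]
      have h2 : z.2 < z'.2 := by nlinarith [hzt.2.2, hzt'.2.1]
      nlinarith [mul_nonpos_of_nonneg_of_nonpos hc hD.le, mul_pos (sub_pos.2 h1) (sub_pos.2 h2)]
    have hinj : Set.InjOn (fun kl : ℤ × ℤ => kl.1 - kl.2) V := by
      rintro ⟨k, l⟩ hkl ⟨k', l'⟩ hkl' hsum
      simp only [Prod.mk.injEq]
      simp only at hsum
      rcases lt_trichotomy k k' with h | h | h
      · exact absurd (key k l k' l' hkl hkl' h (by omega)) (by simp)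
      · exact ⟨h, by omega⟩
      · exact absurd (key k' l' k l hkl' hkl h (by omega)) (by simp)
    have himg : (fun kl : ℤ × ℤ => kl.1 - kl.2) '' V ⊆ ↑(Finset.Icc (m - N + 1) (M - n - 1)) := by
      rintro x ⟨⟨k, l⟩, hkl, rfl⟩
      obtain ⟨h1, h2, h3, h4⟩ := hbound _ hkl
      simp only [Finset.coe_Icc, Set.mem_Icc]
      omega
    have hcard : V.ncard ≤ (M - n - 1 + 1 - (m - N + 1)).toNat := by
      rw [← Set.ncard_image_of_injOn hinj]
      calc ((fun kl : ℤ × ℤ => kl.1 - kl.2) '' V).ncard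
          ≤ (↑(Finset.Icc (m - N + 1) (M - n - 1)) : Set ℤ).ncard :=
            Set.ncard_le_ncard himg (Finset.finite_toSet _)
        _ = _ := by rw [Set.ncard_coe_finset, Int.card_Icc]
    have hpos : (0 : ℤ) ≤ M - n - 1 + 1 - (m - N + 1) := by omega
    have : (V.ncard : ℤ) ≤ ((M - n - 1 + 1 - (m - N + 1)).toNat : ℤ) := by exact_mod_cast hcard
    rw [Int.toNat_of_nonneg hpos] at this
    omega
end

section
/- Let a, b > 0 and let S be a segment with endpoints (x₁,y₁), (x₂,y₂) whose discrete bounding rectangle has normalized dimensions i, j with i ≥ 1 and j ≥ 1. Then the number of tiles of the a×b grid visited by S equals i + j − 1 if and only if S contains no grid point (k·a, l·b) with integers k, l satisfying ⌊min(x₁,x₂)/a⌋ < k < ⌈max(x₁,x₂)/a⌉ and ⌊min(y₁,y₂)/b⌋ < l < ⌈max(y₁,y₂)/b⌉ (i.e., no grid point in the interior of the discrete bounding rectangle). -/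
open Set

/-!
After rescaling to the unit grid and reflecting so that both coordinates increase along the
segment, the segment is a chain for the product order. Hence distinct visited tiles `(k, l)`
have distinct index sums `k + l`, all lying in an interval of `i + j - 1` integers. A grid point
`(k, l)` on the segment rules out the sum `k + l - 1`. Conversely, if there is no inner grid
point, each sum `s` of the interval is attained: by the tile of an endpoint, or by the tile
containing the point where the segment crosses the line `x + y = s + 1`.
-/

theorem isChain_segment {E : Type*} [AddCommGroup E] [PartialOrder E] [IsOrderedAddMonoid E]
    [Module ℝ E] [IsStrictOrderedModule ℝ E] [PosSMulReflectLE ℝ E] {x y : E} (h : x ≤ y) :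
    IsChain (· ≤ ·) (segment ℝ x y) := by
  rw [segment_eq_image_lineMap]
  rintro _ ⟨r, -, rfl⟩ _ ⟨r', -, rfl⟩ -
  rcases lt_or_ge r r' with hr | hr
  · exact .inl ((lineMap_le_lineMap_iff_of_lt hr).2 h)
  · rcases hr.lt_or_eq with hr | rfl
    · exact .inr ((lineMap_le_lineMap_iff_of_lt hr).2 h)
    · exact .inl le_rfl

theorem div_mem_segment_div_iff {c d : ℝ} (hc : c ≠ 0) (hd : d ≠ 0) {p q z : ℝ × ℝ} :
    (z.1 / c, z.2 / d) ∈ segment ℝ (p.1 / c, p.2 / d) (q.1 / c, q.2 / d) ↔ z ∈ segment ℝ p q := by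
  let f : ℝ × ℝ →ₗ[ℝ] ℝ × ℝ := (c⁻¹ • LinearMap.id).prodMap (d⁻¹ • LinearMap.id)
  have hf (z : ℝ × ℝ) : f z = (z.1 / c, z.2 / d) := by simp [f, div_eq_inv_mul]
  have hinj : Function.Injective f := fun z w h => by
    simp only [hf, Prod.mk.injEq, div_left_inj' hc, div_left_inj' hd] at h
    exact Prod.ext h.1 h.2
  have h := Set.ext_iff.1 (image_segment ℝ f.toAffineMap p q) (f z)
  rw [LinearMap.coe_toAffineMap, hinj.mem_set_image] at h
  simpa only [hf] using h.symm

theorem neg_snd_mem_segment_iff {p q z : ℝ × ℝ} :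
    (z.1, -z.2) ∈ segment ℝ (p.1, -p.2) (q.1, -q.2) ↔ z ∈ segment ℝ p q := by
  simpa only [div_one, div_neg] using div_mem_segment_div_iff one_ne_zero (neg_ne_zero.2 one_ne_zero)

theorem exists_mem_openSegment_add_eq {p q : ℝ × ℝ} {s : ℝ} (h : s ∈ Ioo (p.1 + p.2) (q.1 + q.2)) :
    ∃ z ∈ openSegment ℝ p q, z.1 + z.2 = s := by
  let w : ℝ × ℝ →ₗ[ℝ] ℝ := LinearMap.fst ℝ ℝ ℝ + LinearMap.snd ℝ ℝ ℝ
  have hw := image_openSegment ℝ w.toAffineMap p q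
  rw [← openSegment_eq_Ioo (h.1.trans h.2)] at h
  exact (Set.ext_iff.1 hw s).2 h

theorem floor_lt_and_lt_ceil_of_mem_openSegment {x y : ℝ} {k : ℤ} (hxy : x ≤ y)
    (h : ⌊x⌋ < ⌈y⌉) (hk : (k : ℝ) ∈ openSegment ℝ x y) : ⌊x⌋ < k ∧ k < ⌈y⌉ := by
  rcases hxy.lt_or_eq with hlt | rfl
  · rw [openSegment_eq_Ioo hlt] at hk
    exact ⟨Int.floor_lt.2 hk.1, Int.lt_ceil.2 hk.2⟩
  · rw [openSegment_same, mem_singleton_iff] at hk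
    simp [← hk] at h

def visitedTiles (a b : ℝ) (p q : ℝ × ℝ) : Set (ℤ × ℤ) :=
  {kl : ℤ × ℤ | (segment ℝ p q ∩ tileInt a b kl.1 kl.2).Nonempty}

def NoInnerGridPoint (a b : ℝ) (p q : ℝ × ℝ) : Prop :=
  ∀ k l : ℤ, ⌊min p.1 q.1 / a⌋ < k → k < ⌈max p.1 q.1 / a⌉ →
    ⌊min p.2 q.2 / b⌋ < l → l < ⌈max p.2 q.2 / b⌉ →
    ((k : ℝ) * a, (l : ℝ) * b) ∉ segment ℝ p q

theorem mem_tileInt_one {z : ℝ × ℝ} {k l : ℤ} :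
    z ∈ tileInt 1 1 k l ↔ ((k : ℝ) < z.1 ∧ z.1 < k + 1) ∧ ((l : ℝ) < z.2 ∧ z.2 < l + 1) := by
  simp [tileInt]

theorem div_mem_tileInt_one_iff {a b : ℝ} (ha : 0 < a) (hb : 0 < b) {z : ℝ × ℝ} {k l : ℤ} :
    (z.1 / a, z.2 / b) ∈ tileInt 1 1 k l ↔ z ∈ tileInt a b k l := by
  simp only [tileInt, mem_prod, mem_Ioo, mul_one, lt_div_iff₀ ha, div_lt_iff₀ ha,
    lt_div_iff₀ hb, div_lt_iff₀ hb]

theorem neg_snd_mem_tileInt_one_iff {z : ℝ × ℝ} {k l : ℤ} :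
    (z.1, -z.2) ∈ tileInt 1 1 k l ↔ z ∈ tileInt 1 1 k (-l - 1) := by
  simp only [mem_tileInt_one, Int.cast_sub, Int.cast_neg, Int.cast_one]
  constructor <;> rintro ⟨hk, hl₁, hl₂⟩ <;> exact ⟨hk, by linarith, by linarith⟩

theorem mem_tileInt_one_floor {z : ℝ × ℝ} (h : (⌊z.1⌋ + ⌊z.2⌋ : ℝ) + 1 ≤ z.1 + z.2) :
    z ∈ tileInt 1 1 ⌊z.1⌋ ⌊z.2⌋ := by
  have hx := Int.lt_floor_add_one z.1
  have hy := Int.lt_floor_add_one z.2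
  exact mem_tileInt_one.2 ⟨⟨by linarith, hx⟩, by linarith, hy⟩

theorem mem_tileInt_one_ceil {z : ℝ × ℝ} (h : z.1 + z.2 ≤ (⌈z.1⌉ + ⌈z.2⌉ : ℝ) - 1) :
    z ∈ tileInt 1 1 (⌈z.1⌉ - 1) (⌈z.2⌉ - 1) := by
  have hx := Int.ceil_lt_add_one z.1
  have hy := Int.ceil_lt_add_one z.2
  refine mem_tileInt_one.2 ⟨⟨?_, ?_⟩, ?_, ?_⟩ <;> push_cast <;> linarith

theorem mem_tileInt_one_of_add_eq_intCast {z : ℝ × ℝ} {n : ℤ} (h : z.1 + z.2 = n)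
    (hz : (⌊z.1⌋ : ℝ) ≠ z.1) : z ∈ tileInt 1 1 ⌊z.1⌋ ⌊z.2⌋ ∧ ⌊z.1⌋ + ⌊z.2⌋ = n - 1 := by
  have hx : 0 < Int.fract z.1 := (Int.fract_nonneg _).lt_of_ne fun h' => hz (by
    rw [Int.fract] at h'; linarith)
  have hfract : Int.fract z.1 + Int.fract z.2 = ((n - ⌊z.1⌋ - ⌊z.2⌋ : ℤ) : ℝ) := by
    push_cast; rw [Int.fract, Int.fract]; linarith
  -- an integer sum of two fractional parts, the first one positive, is `1`
  have hone : n - ⌊z.1⌋ - ⌊z.2⌋ = 1 := by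
    have h₀ : 0 < n - ⌊z.1⌋ - ⌊z.2⌋ :=
      (Int.cast_pos (R := ℝ)).1 (by linarith [Int.fract_nonneg z.2])
    have h₂ : n - ⌊z.1⌋ - ⌊z.2⌋ < 2 := by
      exact_mod_cast (hfract ▸ by linarith [Int.fract_lt_one z.1, Int.fract_lt_one z.2] :
        ((n - ⌊z.1⌋ - ⌊z.2⌋ : ℤ) : ℝ) < 2)
    omega
  refine ⟨mem_tileInt_one_floor ?_, by omega⟩
  have : ((n - ⌊z.1⌋ - ⌊z.2⌋ : ℤ) : ℝ) = 1 := by rw [hone, Int.cast_one]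
  push_cast at this
  linarith

theorem visitCount_eq_ncard (a b : ℝ) (p q : ℝ × ℝ) :
    visitCount a b p q = (visitedTiles a b p q).ncard := rfl

theorem visitCount_eq_of_surjective {a b a' b' : ℝ} {p q p' q' : ℝ × ℝ} {g : ℝ × ℝ → ℝ × ℝ}
    (hg : g.Surjective) (e : ℤ × ℤ ≃ ℤ × ℤ)
    (hseg : ∀ z, g z ∈ segment ℝ p' q' ↔ z ∈ segment ℝ p q)
    (htile : ∀ z kl, g z ∈ tileInt a' b' (e kl).1 (e kl).2 ↔ z ∈ tileInt a b kl.1 kl.2) :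
    visitCount a' b' p' q' = visitCount a b p q := by
  have hV : visitedTiles a' b' p' q' = e '' visitedTiles a b p q := by
    ext kl
    obtain ⟨kl, rfl⟩ := e.surjective kl
    rw [e.injective.mem_set_image]
    constructor
    · rintro ⟨w, hw, hwt⟩
      obtain ⟨z, rfl⟩ := hg w
      exact ⟨z, (hseg z).1 hw, (htile z kl).1 hwt⟩
    · rintro ⟨z, hz, hzt⟩
      exact ⟨g z, (hseg z).2 hz, (htile z kl).2 hzt⟩
  rw [visitCount_eq_ncard, visitCount_eq_ncard, hV, e.injective.injOn.ncard_image]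

theorem visitCount_comm (a b : ℝ) (p q : ℝ × ℝ) : visitCount a b q p = visitCount a b p q :=
  visitCount_eq_of_surjective Function.surjective_id (Equiv.refl _)
    (fun _ => by rw [segment_symm, id]) fun _ _ => Iff.rfl

theorem visitCount_eq_visitCount_one {a b : ℝ} (ha : 0 < a) (hb : 0 < b) (p q : ℝ × ℝ) :
    visitCount a b p q = visitCount 1 1 (p.1 / a, p.2 / b) (q.1 / a, q.2 / b) := by
  refine (visitCount_eq_of_surjective (g := fun z => (z.1 / a, z.2 / b))
    (fun w => ⟨(w.1 * a, w.2 * b), ?_⟩) (Equiv.refl _)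
    (fun _ => div_mem_segment_div_iff ha.ne' hb.ne') fun _ _ => div_mem_tileInt_one_iff ha hb).symm
  simp [ha.ne', hb.ne']

theorem visitCount_one_neg_snd (p q : ℝ × ℝ) :
    visitCount 1 1 (p.1, -p.2) (q.1, -q.2) = visitCount 1 1 p q := by
  refine visitCount_eq_of_surjective (g := fun z => (z.1, -z.2)) (fun w => ⟨(w.1, -w.2), by simp⟩)
    ⟨fun kl => (kl.1, -kl.2 - 1), fun kl => (kl.1, -kl.2 - 1), fun kl => by simp, fun kl => by simp⟩
    (fun _ => neg_snd_mem_segment_iff) fun z kl => ?_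
  simpa using neg_snd_mem_tileInt_one_iff (z := z) (k := kl.1) (l := -kl.2 - 1)

theorem normWidth_comm (a : ℝ) (p q : ℝ × ℝ) : normWidth a q p = normWidth a p q := by
  rw [normWidth, normWidth, min_comm, max_comm]

theorem normHeight_comm (b : ℝ) (p q : ℝ × ℝ) : normHeight b q p = normHeight b p q := by
  rw [normHeight, normHeight, min_comm, max_comm]

theorem noInnerGridPoint_comm (a b : ℝ) (p q : ℝ × ℝ) :
    NoInnerGridPoint a b q p ↔ NoInnerGridPoint a b p q := by
  simp only [NoInnerGridPoint, min_comm q.1, max_comm q.1, min_comm q.2, max_comm q.2,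
    segment_symm ℝ q p]

theorem normWidth_eq_normWidth_one {a : ℝ} (ha : 0 < a) (b : ℝ) (p q : ℝ × ℝ) :
    normWidth a p q = normWidth 1 (p.1 / a, p.2 / b) (q.1 / a, q.2 / b) := by
  simp only [normWidth, div_one, max_div_div_right ha.le, min_div_div_right ha.le]

theorem normHeight_eq_normHeight_one (a : ℝ) {b : ℝ} (hb : 0 < b) (p q : ℝ × ℝ) :
    normHeight b p q = normHeight 1 (p.1 / a, p.2 / b) (q.1 / a, q.2 / b) := by
  simp only [normHeight, div_one, max_div_div_right hb.le, min_div_div_right hb.le]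

theorem noInnerGridPoint_iff_one {a b : ℝ} (ha : 0 < a) (hb : 0 < b) (p q : ℝ × ℝ) :
    NoInnerGridPoint a b p q ↔ NoInnerGridPoint 1 1 (p.1 / a, p.2 / b) (q.1 / a, q.2 / b) := by
  simp only [NoInnerGridPoint, div_one, mul_one, max_div_div_right ha.le, min_div_div_right ha.le,
    max_div_div_right hb.le, min_div_div_right hb.le]
  refine forall₂_congr fun k l => ?_
  rw [← div_mem_segment_div_iff ha.ne' hb.ne', mul_div_cancel_right₀ _ ha.ne',
    mul_div_cancel_right₀ _ hb.ne']

theorem normWidth_mk_fst (a : ℝ) (p q : ℝ × ℝ) (y y' : ℝ) :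
    normWidth a (p.1, y) (q.1, y') = normWidth a p q := rfl

theorem normHeight_one_neg_snd (p q : ℝ × ℝ) :
    normHeight 1 (p.1, -p.2) (q.1, -q.2) = normHeight 1 p q := by
  simp only [normHeight, div_one, min_neg_neg, max_neg_neg, Int.ceil_neg, Int.floor_neg]
  ring

theorem noInnerGridPoint_one_neg_snd (p q : ℝ × ℝ) :
    NoInnerGridPoint 1 1 (p.1, -p.2) (q.1, -q.2) ↔ NoInnerGridPoint 1 1 p q := by
  simp only [NoInnerGridPoint, div_one, mul_one, min_neg_neg, max_neg_neg, Int.ceil_neg,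
    Int.floor_neg]
  refine forall_congr' fun k => (Equiv.neg ℤ).forall_congr fun l => ?_
  have h := neg_snd_mem_segment_iff (z := ((k : ℝ), -(l : ℝ))) (p := p) (q := q)
  simp only [neg_neg] at h
  simp only [Equiv.neg_apply, Int.cast_neg, h]
  constructor <;> exact fun H h₁ h₂ h₃ h₄ => H h₁ h₂ (by omega) (by omega)

section Monotone

variable {p q : ℝ × ℝ}

theorem normWidth_one_of_le (h : p.1 ≤ q.1) : normWidth 1 p q = ⌈q.1⌉ - ⌊p.1⌋ := by
  simp [normWidth, h]

theorem normHeight_one_of_le (h : p.2 ≤ q.2) : normHeight 1 p q = ⌈q.2⌉ - ⌊p.2⌋ := by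
  simp [normHeight, h]

theorem noInnerGridPoint_one_iff_of_le (hpq : p ≤ q) :
    NoInnerGridPoint 1 1 p q ↔ ∀ k l : ℤ, ⌊p.1⌋ < k → k < ⌈q.1⌉ → ⌊p.2⌋ < l → l < ⌈q.2⌉ →
      ((k : ℝ), (l : ℝ)) ∉ segment ℝ p q := by
  simp [NoInnerGridPoint, hpq.1, hpq.2]

theorem visitedTiles_one_subset (hpq : p ≤ q) :
    visitedTiles 1 1 p q ⊆ Ico ⌊p.1⌋ ⌈q.1⌉ ×ˢ Ico ⌊p.2⌋ ⌈q.2⌉ := by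
  rintro ⟨k, l⟩ ⟨z, hz, hzt⟩
  obtain ⟨⟨hk₁, hk₂⟩, hl₁, hl₂⟩ := mem_tileInt_one.1 hzt
  obtain ⟨⟨hpz₁, hpz₂⟩, hzq₁, hzq₂⟩ := segment_subset_Icc hpq hz
  simp only [mem_prod, mem_Ico, Int.floor_le_iff, Int.lt_ceil]
  exact ⟨⟨by linarith, by linarith⟩, by linarith, by linarith⟩

theorem le_of_mem_visitedTiles_one_of_lt (hpq : p ≤ q) {k l k' l' : ℤ}
    (h : (k, l) ∈ visitedTiles 1 1 p q) (h' : (k', l') ∈ visitedTiles 1 1 p q) (hk : k < k') :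
    l ≤ l' := by
  obtain ⟨z, hz, hzt⟩ := h
  obtain ⟨z', hz', hzt'⟩ := h'
  obtain ⟨⟨-, hk₂⟩, hl₁, -⟩ := mem_tileInt_one.1 hzt
  obtain ⟨⟨hk₁', -⟩, -, hl₂'⟩ := mem_tileInt_one.1 hzt'
  have hkk' : (k : ℝ) + 1 ≤ k' := by exact_mod_cast hk
  rcases isChain_segment hpq |>.total hz hz' with hzz' | hz'z
  · have : (l : ℝ) < l' + 1 := by linarith [hzz'.2]
    exact Int.lt_add_one_iff.1 (by exact_mod_cast this)
  · linarith [hz'z.1]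

theorem injOn_add_visitedTiles_one (hpq : p ≤ q) :
    InjOn (fun kl : ℤ × ℤ => kl.1 + kl.2) (visitedTiles 1 1 p q) := by
  rintro ⟨k, l⟩ h ⟨k', l'⟩ h' (hsum : k + l = k' + l')
  rcases lt_trichotomy k k' with hk | rfl | hk
  · have := le_of_mem_visitedTiles_one_of_lt hpq h h' hk
    omega
  · rw [add_left_cancel hsum]
  · have := le_of_mem_visitedTiles_one_of_lt hpq h' h hk
    omega

theorem add_ne_of_mem_visitedTiles_one (hpq : p ≤ q) {k l : ℤ}
    (hg : ((k : ℝ), (l : ℝ)) ∈ segment ℝ p q) {kl : ℤ × ℤ} (h : kl ∈ visitedTiles 1 1 p q) :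
    kl.1 + kl.2 ≠ k + l - 1 := by
  obtain ⟨z, hz, hzt⟩ := h
  obtain ⟨⟨hk₁, hk₂⟩, hl₁, hl₂⟩ := mem_tileInt_one.1 hzt
  rcases isChain_segment hpq |>.total hz hg with
    ⟨hzg₁ : z.1 ≤ k, hzg₂ : z.2 ≤ l⟩ | ⟨hgz₁ : (k : ℝ) ≤ z.1, hgz₂ : (l : ℝ) ≤ z.2⟩
  · have : kl.1 < k := by exact_mod_cast hk₁.trans_le hzg₁
    have : kl.2 < l := by exact_mod_cast hl₁.trans_le hzg₂
    omega
  · have : k < kl.1 + 1 := by exact_mod_cast hgz₁.trans_lt hk₂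
    have : l < kl.2 + 1 := by exact_mod_cast hgz₂.trans_lt hl₂
    omega

theorem exists_mem_visitedTiles_one_add_eq (hpq : p ≤ q) (hi : ⌊p.1⌋ < ⌈q.1⌉) (hj : ⌊p.2⌋ < ⌈q.2⌉)
    (hfree : ∀ k l : ℤ, ⌊p.1⌋ < k → k < ⌈q.1⌉ → ⌊p.2⌋ < l → l < ⌈q.2⌉ →
      ((k : ℝ), (l : ℝ)) ∉ segment ℝ p q)
    {s : ℤ} (hs : s ∈ Icc (⌊p.1⌋ + ⌊p.2⌋) (⌈q.1⌉ + ⌈q.2⌉ - 2)) :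
    ∃ kl ∈ visitedTiles 1 1 p q, kl.1 + kl.2 = s := by
  obtain ⟨hs₁, hs₂⟩ := hs
  have hs₁' : ((⌊p.1⌋ + ⌊p.2⌋ : ℤ) : ℝ) ≤ s := by exact_mod_cast hs₁
  have hs₂' : (s : ℝ) ≤ ((⌈q.1⌉ + ⌈q.2⌉ - 2 : ℤ) : ℝ) := by exact_mod_cast hs₂
  push_cast at hs₁' hs₂'
  rcases le_or_gt ((s : ℝ) + 1) (p.1 + p.2) with hp | hp
  · refine ⟨(⌊p.1⌋, ⌊p.2⌋), ⟨p, left_mem_segment ℝ p q, mem_tileInt_one_floor (by linarith)⟩, ?_⟩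
    have : (s : ℝ) < ((⌊p.1⌋ + ⌊p.2⌋ + 1 : ℤ) : ℝ) := by
      push_cast; linarith [Int.lt_floor_add_one p.1, Int.lt_floor_add_one p.2]
    have := Int.cast_lt.1 this
    dsimp only
    omega
  rcases le_or_gt (q.1 + q.2) ((s : ℝ) + 1) with hq | hq
  · refine ⟨(⌈q.1⌉ - 1, ⌈q.2⌉ - 1),
      ⟨q, right_mem_segment ℝ p q, mem_tileInt_one_ceil (by linarith)⟩, ?_⟩
    have : ((⌈q.1⌉ + ⌈q.2⌉ - 3 : ℤ) : ℝ) < s := by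
      push_cast; linarith [Int.ceil_lt_add_one q.1, Int.ceil_lt_add_one q.2]
    have := Int.cast_lt.1 this
    dsimp only
    omega
  -- the segment crosses the line `x + y = s + 1` at an inner point `z`
  obtain ⟨z, hz, hzs⟩ := exists_mem_openSegment_add_eq ⟨hp, hq⟩
  by_cases hint : (⌊z.1⌋ : ℝ) = z.1
  · have hl : ((s + 1 - ⌊z.1⌋ : ℤ) : ℝ) = z.2 := by push_cast; linarith
    obtain ⟨hz₁, hz₂⟩ := Prod.openSegment_subset p q hz
    rw [← hint] at hz₁
    rw [← hl] at hz₂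
    obtain ⟨hk₁, hk₂⟩ := floor_lt_and_lt_ceil_of_mem_openSegment hpq.1 hi hz₁
    obtain ⟨hl₁, hl₂⟩ := floor_lt_and_lt_ceil_of_mem_openSegment hpq.2 hj hz₂
    have hzg : z = ((⌊z.1⌋ : ℝ), ((s + 1 - ⌊z.1⌋ : ℤ) : ℝ)) := Prod.ext hint.symm hl.symm
    exact (hfree _ _ hk₁ hk₂ hl₁ hl₂ (hzg ▸ openSegment_subset_segment ℝ p q hz)).elim
  · obtain ⟨hzt, hsum⟩ :=
      mem_tileInt_one_of_add_eq_intCast (n := s + 1) (by push_cast; exact hzs) hint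
    exact ⟨(⌊z.1⌋, ⌊z.2⌋), ⟨z, openSegment_subset_segment ℝ p q hz, hzt⟩, by dsimp only; omega⟩

theorem visitCount_one_eq_iff_of_le (hpq : p ≤ q) (hi : 1 ≤ normWidth 1 p q)
    (hj : 1 ≤ normHeight 1 p q) :
    (visitCount 1 1 p q : ℤ) = normWidth 1 p q + normHeight 1 p q - 1 ↔
      NoInnerGridPoint 1 1 p q := by
  rw [normWidth_one_of_le hpq.1] at hi ⊢
  rw [normHeight_one_of_le hpq.2] at hj ⊢
  rw [noInnerGridPoint_one_iff_of_le hpq]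
  have hI : ((Icc (⌊p.1⌋ + ⌊p.2⌋) (⌈q.1⌉ + ⌈q.2⌉ - 2)).ncard : ℤ) =
      (⌈q.1⌉ - ⌊p.1⌋) + (⌈q.2⌉ - ⌊p.2⌋) - 1 := by
    rw [← Finset.coe_Icc, Set.ncard_coe_finset, Int.card_Icc]
    omega
  set I := Icc (⌊p.1⌋ + ⌊p.2⌋) (⌈q.1⌉ + ⌈q.2⌉ - 2)
  set S := (fun kl : ℤ × ℤ => kl.1 + kl.2) '' visitedTiles 1 1 p q
  have hS : S.ncard = visitCount 1 1 p q := (injOn_add_visitedTiles_one hpq).ncard_image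
  have hSI : S ⊆ I := by
    rintro _ ⟨⟨k, l⟩, h, rfl⟩
    obtain ⟨⟨hk₁, hk₂⟩, hl₁, hl₂⟩ := visitedTiles_one_subset hpq h
    dsimp only
    exact ⟨by omega, by omega⟩
  rw [← hS, ← hI, Nat.cast_inj]
  constructor
  · intro hcount k l hk₁ hk₂ hl₁ hl₂ hg
    have hmem : k + l - 1 ∈ I := ⟨by omega, by omega⟩
    have hle := Set.ncard_le_ncard (subset_sdiff_singleton hSI ?_)
      ((finite_Icc _ _).sdiff (t := {k + l - 1}))
    · rw [ncard_sdiff_singleton_of_mem hmem, hcount] at hle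
      have := (Set.ncard_pos (finite_Icc _ _)).2 ⟨_, hmem⟩
      omega
    · rintro ⟨kl, h, hkl⟩
      exact add_ne_of_mem_visitedTiles_one hpq hg h hkl
  · intro hfree
    exact congrArg ncard (hSI.antisymm fun s hs =>
      exists_mem_visitedTiles_one_add_eq hpq (by omega) (by omega) hfree hs)

end Monotone

theorem visitCount_one_eq_iff (p q : ℝ × ℝ) (hi : 1 ≤ normWidth 1 p q)
    (hj : 1 ≤ normHeight 1 p q) :
    (visitCount 1 1 p q : ℤ) = normWidth 1 p q + normHeight 1 p q - 1 ↔
      NoInnerGridPoint 1 1 p q := by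
  wlog hx : p.1 ≤ q.1 generalizing p q
  · simpa only [visitCount_comm, normWidth_comm, normHeight_comm, noInnerGridPoint_comm] using
      this q p (normWidth_comm 1 p q ▸ hi) (normHeight_comm 1 p q ▸ hj) (le_of_not_ge hx)
  wlog hy : p.2 ≤ q.2 generalizing p q
  · simpa only [visitCount_one_neg_snd, normWidth_mk_fst, normHeight_one_neg_snd,
      noInnerGridPoint_one_neg_snd] using
      this (p.1, -p.2) (q.1, -q.2) hi (normHeight_one_neg_snd p q ▸ hj) hx
        (neg_le_neg (le_of_not_ge hy))
  exact visitCount_one_eq_iff_of_le ⟨hx, hy⟩ hi hj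

theorem stmt_1 (a b : ℝ) (ha : 0 < a) (hb : 0 < b) (p q : ℝ × ℝ)
    (hi : 1 ≤ normWidth a p q) (hj : 1 ≤ normHeight b p q) :
    (visitCount a b p q : ℤ) = normWidth a p q + normHeight b p q - 1 ↔
      ∀ k l : ℤ, ⌊min p.1 q.1 / a⌋ < k → k < ⌈max p.1 q.1 / a⌉ →
        ⌊min p.2 q.2 / b⌋ < l → l < ⌈max p.2 q.2 / b⌉ →
        ((k : ℝ) * a, (l : ℝ) * b) ∉ segment ℝ p q := by
  rw [normWidth_eq_normWidth_one ha b] at hi ⊢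
  rw [normHeight_eq_normHeight_one a hb] at hj ⊢
  rw [visitCount_eq_visitCount_one ha hb]
  exact (visitCount_one_eq_iff _ _ hi hj).trans (noInnerGridPoint_iff_one ha hb p q).symm
end

section
/- Let a, b, ℓ > 0 and let i, j ∈ ℕ with i, j ≥ 2. If S is a segment of length ℓ whose discrete bounding rectangle has normalized dimensions i and j, then √((i−2)²·a² + (j−2)²·b²) < ℓ and ℓ ≤ √(i²·a² + j²·b²). -/
open Set

lemma dim_bounds (a m M : ℝ) (i : ℕ) (ha : 0 < a) (hi : 2 ≤ i) (hmM : m ≤ M)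
    (h : (⌈M / a⌉ - ⌊m / a⌋ : ℤ) = (i : ℤ)) :
    ((i : ℝ) - 2) * a < M - m ∧ M - m ≤ (i : ℝ) * a := by
  have h1 : (⌈M / a⌉ : ℝ) < M / a + 1 := Int.ceil_lt_add_one _
  have h2 : m / a - 1 < (⌊m / a⌋ : ℝ) := Int.sub_one_lt_floor _
  have h3 : M / a ≤ (⌈M / a⌉ : ℝ) := Int.le_ceil _
  have h4 : (⌊m / a⌋ : ℝ) ≤ m / a := Int.floor_le _
  have he : ((⌈M / a⌉ : ℝ) - (⌊m / a⌋ : ℝ)) = (i : ℝ) := by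
    exact_mod_cast congrArg (Int.cast : ℤ → ℝ) h
  constructor
  · have : (i : ℝ) - 2 < M / a - m / a := by linarith
    have := mul_lt_mul_of_pos_right this ha
    calc ((i:ℝ) - 2) * a < (M / a - m / a) * a := this
      _ = M - m := by field_simp
  · have : M / a - m / a ≤ (i : ℝ) := by linarith
    have := mul_le_mul_of_nonneg_right this ha.le
    calc M - m = (M / a - m / a) * a := by field_simp
      _ ≤ (i : ℝ) * a := this

theorem stmt_2 (a b ℓ : ℝ) (ha : 0 < a) (hb : 0 < b) (hℓ : 0 < ℓ)
    (i j : ℕ) (hi : 2 ≤ i) (hj : 2 ≤ j) (p q : ℝ × ℝ)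
    (hlen : segLen p q = ℓ)
    (hw : normWidth a p q = (i : ℤ)) (hh : normHeight b p q = (j : ℤ)) :
    Real.sqrt (((i : ℝ) - 2) ^ 2 * a ^ 2 + ((j : ℝ) - 2) ^ 2 * b ^ 2) < ℓ ∧
    ℓ ≤ Real.sqrt ((i : ℝ) ^ 2 * a ^ 2 + (j : ℝ) ^ 2 * b ^ 2) := by
  have hw' : (⌈max p.1 q.1 / a⌉ - ⌊min p.1 q.1 / a⌋ : ℤ) = (i : ℤ) := hw
  have hh' : (⌈max p.2 q.2 / b⌉ - ⌊min p.2 q.2 / b⌋ : ℤ) = (j : ℤ) := hh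
  obtain ⟨hx1, hx2⟩ := dim_bounds a _ _ i ha hi (min_le_max) hw'
  obtain ⟨hy1, hy2⟩ := dim_bounds b _ _ j hb hj (min_le_max) hh'
  have hdx : (p.1 - q.1) ^ 2 = (max p.1 q.1 - min p.1 q.1) ^ 2 := by
    rw [max_sub_min_eq_abs, sq_abs]; ring
  have hdy : (p.2 - q.2) ^ 2 = (max p.2 q.2 - min p.2 q.2) ^ 2 := by
    rw [max_sub_min_eq_abs, sq_abs]; ring
  have hi0 : (0:ℝ) ≤ ((i:ℝ) - 2) * a := by
    have : (2:ℝ) ≤ (i:ℝ) := by exact_mod_cast hi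
    exact mul_nonneg (by linarith) ha.le
  have hj0 : (0:ℝ) ≤ ((j:ℝ) - 2) * b := by
    have : (2:ℝ) ≤ (j:ℝ) := by exact_mod_cast hj
    exact mul_nonneg (by linarith) hb.le
  have hS : ℓ = Real.sqrt ((p.1 - q.1) ^ 2 + (p.2 - q.2) ^ 2) := hlen.symm
  have hdx0 : (0:ℝ) ≤ max p.1 q.1 - min p.1 q.1 := sub_nonneg.2 min_le_max
  have hdy0 : (0:ℝ) ≤ max p.2 q.2 - min p.2 q.2 := sub_nonneg.2 min_le_max
  constructor
  · rw [hS]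
    apply Real.sqrt_lt_sqrt (by positivity)
    rw [hdx, hdy]
    nlinarith [hx1, hy1, hi0, hj0]
  · rw [hS]
    apply Real.sqrt_le_sqrt
    rw [hdx, hdy]
    nlinarith [hx2, hy2, hdx0, hdy0]
end

section
/- Let a, b, ℓ > 0 and let i, j ∈ ℕ with i, j ≥ 2. If √((i−2)²·a² + (j−2)²·b²) < ℓ ≤ √(i²·a² + j²·b²), then there exists a segment of length ℓ whose discrete bounding rectangle has normalized dimensions i and j. -/
open Set

-- choose w,h helper
lemma exists_wh (A0 A B0 B ℓ : ℝ) (hA0 : 0 ≤ A0) (hB0 : 0 ≤ B0)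
    (hAA : A0 < A) (hBB : B0 < B)
    (h1 : A0 ^ 2 + B0 ^ 2 < ℓ ^ 2) (h2 : ℓ ^ 2 ≤ A ^ 2 + B ^ 2) :
    ∃ w h : ℝ, A0 < w ∧ w ≤ A ∧ B0 < h ∧ h ≤ B ∧ w ^ 2 + h ^ 2 = ℓ ^ 2 := by
  set s : ℝ := ℓ ^ 2 - A0 ^ 2 - B0 ^ 2 with hs
  have hspos : 0 < s := by simp [hs]; linarith
  have hA : 0 ≤ A := le_trans hA0 hAA.le
  have hB : 0 ≤ B := le_trans hB0 hBB.le
  by_cases hc1 : A ^ 2 < A0 ^ 2 + s / 2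
  · refine ⟨A, Real.sqrt (ℓ ^ 2 - A ^ 2), hAA, le_refl _, ?_, ?_, ?_⟩
    · rw [Real.lt_sqrt hB0]
      linarith
    · calc Real.sqrt (ℓ ^ 2 - A ^ 2) ≤ Real.sqrt (B ^ 2) :=
            Real.sqrt_le_sqrt (by linarith)
        _ = B := Real.sqrt_sq hB
    · rw [Real.sq_sqrt (by nlinarith : (0:ℝ) ≤ ℓ ^ 2 - A ^ 2)]; ring
  · by_cases hc2 : B ^ 2 < B0 ^ 2 + s / 2
    · refine ⟨Real.sqrt (ℓ ^ 2 - B ^ 2), B, ?_, ?_, hBB, le_refl _, ?_⟩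
      · rw [Real.lt_sqrt hA0]
        linarith
      · calc Real.sqrt (ℓ ^ 2 - B ^ 2) ≤ Real.sqrt (A ^ 2) :=
            Real.sqrt_le_sqrt (by linarith)
          _ = A := Real.sqrt_sq hA
      · rw [Real.sq_sqrt (by nlinarith : (0:ℝ) ≤ ℓ ^ 2 - B ^ 2)]; ring
    · push_neg at hc1 hc2
      refine ⟨Real.sqrt (A0 ^ 2 + s / 2), Real.sqrt (B0 ^ 2 + s / 2), ?_, ?_, ?_, ?_, ?_⟩
      · rw [Real.lt_sqrt hA0]; linarith
      · calc Real.sqrt (A0 ^ 2 + s / 2) ≤ Real.sqrt (A ^ 2) := Real.sqrt_le_sqrt hc1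
          _ = A := Real.sqrt_sq hA
      · rw [Real.lt_sqrt hB0]; linarith
      · calc Real.sqrt (B0 ^ 2 + s / 2) ≤ Real.sqrt (B ^ 2) := Real.sqrt_le_sqrt hc2
          _ = B := Real.sqrt_sq hB
      · rw [Real.sq_sqrt (by positivity), Real.sq_sqrt (by positivity)]
        simp [hs]; ring


lemma ceil_floor_key (a : ℝ) (ha : 0 < a) (i : ℕ) (w : ℝ)
    (h1 : ((i:ℝ) - 2) * a < w) (h2 : w ≤ (i:ℝ) * a) :
    ⌈(((i:ℝ) * a - w) / 2 + w) / a⌉ = (i : ℤ) ∧ ⌊(((i:ℝ) * a - w) / 2) / a⌋ = 0 := by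
  constructor
  · rw [Int.ceil_eq_iff]
    constructor
    · rw [lt_div_iff₀ ha]; push_cast; linarith
    · rw [div_le_iff₀ ha]; push_cast; linarith
  · rw [Int.floor_eq_iff]
    constructor
    · push_cast
      exact div_nonneg (by linarith) ha.le
    · push_cast
      rw [div_lt_iff₀ ha]; linarith

theorem stmt_3 (a b ℓ : ℝ) (ha : 0 < a) (hb : 0 < b) (hℓ : 0 < ℓ)
    (i j : ℕ) (hi : 2 ≤ i) (hj : 2 ≤ j)
    (h1 : Real.sqrt (((i : ℝ) - 2) ^ 2 * a ^ 2 + ((j : ℝ) - 2) ^ 2 * b ^ 2) < ℓ)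
    (h2 : ℓ ≤ Real.sqrt ((i : ℝ) ^ 2 * a ^ 2 + (j : ℝ) ^ 2 * b ^ 2)) :
    ∃ p q : ℝ × ℝ, segLen p q = ℓ ∧
      normWidth a p q = (i : ℤ) ∧ normHeight b p q = (j : ℤ) := by
  have hi2 : (2:ℝ) ≤ (i:ℝ) := by exact_mod_cast hi
  have hj2 : (2:ℝ) ≤ (j:ℝ) := by exact_mod_cast hj
  have hA0 : 0 ≤ ((i:ℝ) - 2) * a := mul_nonneg (by linarith) ha.le
  have hB0 : 0 ≤ ((j:ℝ) - 2) * b := mul_nonneg (by linarith) hb.le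
  have hAA : ((i:ℝ) - 2) * a < (i:ℝ) * a := by nlinarith
  have hBB : ((j:ℝ) - 2) * b < (j:ℝ) * b := by nlinarith
  have hsq1 : (((i:ℝ) - 2) * a) ^ 2 + (((j:ℝ) - 2) * b) ^ 2 < ℓ ^ 2 := by
    have h := (Real.sqrt_lt' hℓ).mp h1
    nlinarith [h]
  have hsq2 : ℓ ^ 2 ≤ ((i:ℝ) * a) ^ 2 + ((j:ℝ) * b) ^ 2 := by
    have h := (Real.le_sqrt hℓ.le (by positivity)).mp h2
    nlinarith [h]
  obtain ⟨w, h, hw1, hw2, hh1, hh2, hwh⟩ :=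
    exists_wh _ _ _ _ _ hA0 hB0 hAA hBB hsq1 hsq2
  have hw0 : 0 ≤ w := le_trans hA0 hw1.le
  have hh0 : 0 ≤ h := le_trans hB0 hh1.le
  refine ⟨(((i:ℝ)*a - w)/2, ((j:ℝ)*b - h)/2),
    (((i:ℝ)*a - w)/2 + w, ((j:ℝ)*b - h)/2 + h), ?_, ?_, ?_⟩
  · unfold segLen
    simp only
    have e : (((i:ℝ)*a - w)/2 - (((i:ℝ)*a - w)/2 + w))^2
        + (((j:ℝ)*b - h)/2 - (((j:ℝ)*b - h)/2 + h))^2 = ℓ^2 := by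
      rw [← hwh]; ring
    rw [e, Real.sqrt_sq hℓ.le]
  · unfold normWidth
    simp only
    rw [max_eq_right (by linarith), min_eq_left (by linarith)]
    obtain ⟨hc, hf⟩ := ceil_floor_key a ha i w hw1 hw2
    rw [hc, hf]; ring
  · unfold normHeight
    simp only
    rw [max_eq_right (by linarith), min_eq_left (by linarith)]
    obtain ⟨hc, hf⟩ := ceil_floor_key b hb j h hh1 hh2
    rw [hc, hf]; ring
end

section
/- Let a, b, ℓ > 0 and let i, j ∈ ℕ with i, j ≥ 2. There exists a segment of length at most ℓ (and positive length) whose discrete bounding rectangle has normalized dimensions i and j if and only if ℓ > √((i−2)²·a² + (j−2)²·b²). -/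
open Set

theorem stmt_4 (a b ℓ : ℝ) (ha : 0 < a) (hb : 0 < b) (hℓ : 0 < ℓ)
    (i j : ℕ) (hi : 2 ≤ i) (hj : 2 ≤ j) :
    (∃ p q : ℝ × ℝ, 0 < segLen p q ∧ segLen p q ≤ ℓ ∧
        normWidth a p q = (i : ℤ) ∧ normHeight b p q = (j : ℤ)) ↔
      Real.sqrt (((i : ℝ) - 2) ^ 2 * a ^ 2 + ((j : ℝ) - 2) ^ 2 * b ^ 2) < ℓ := by
  have hi2 : (0:ℝ) ≤ (i:ℝ) - 2 := by
    have : (2:ℝ) ≤ (i:ℝ) := by exact_mod_cast hi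
    linarith
  have hj2 : (0:ℝ) ≤ (j:ℝ) - 2 := by
    have : (2:ℝ) ≤ (j:ℝ) := by exact_mod_cast hj
    linarith
  set A : ℝ := ((i:ℝ)-2)*a with hAdef
  set B : ℝ := ((j:ℝ)-2)*b with hBdef
  have hA0 : 0 ≤ A := mul_nonneg hi2 ha.le
  have hB0 : 0 ≤ B := mul_nonneg hj2 hb.le
  have harg : ((i:ℝ)-2)^2*a^2 + ((j:ℝ)-2)^2*b^2 = A^2+B^2 := by rw [hAdef, hBdef]; ring
  rw [harg]
  constructor
  · rintro ⟨p, q, hpos, hle, hw, hh⟩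
    have h1 : (⌈max p.1 q.1 / a⌉ : ℝ) < max p.1 q.1 / a + 1 := Int.ceil_lt_add_one _
    have h2 : min p.1 q.1 / a - 1 < (⌊min p.1 q.1 / a⌋ : ℝ) := Int.sub_one_lt_floor _
    have h3 : (⌈max p.2 q.2 / b⌉ : ℝ) < max p.2 q.2 / b + 1 := Int.ceil_lt_add_one _
    have h4 : min p.2 q.2 / b - 1 < (⌊min p.2 q.2 / b⌋ : ℝ) := Int.sub_one_lt_floor _
    have hw' : ((⌈max p.1 q.1 / a⌉ : ℝ)) - ((⌊min p.1 q.1 / a⌋ : ℝ)) = (i:ℝ) := by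
      exact_mod_cast congrArg (fun z : ℤ => (z : ℝ)) hw
    have hh' : ((⌈max p.2 q.2 / b⌉ : ℝ)) - ((⌊min p.2 q.2 / b⌋ : ℝ)) = (j:ℝ) := by
      exact_mod_cast congrArg (fun z : ℤ => (z : ℝ)) hh
    have hx : A < max p.1 q.1 - min p.1 q.1 := by
      have : (i:ℝ) - 2 < (max p.1 q.1 - min p.1 q.1) / a := by
        rw [sub_div]; linarith
      rw [hAdef]
      calc ((i:ℝ)-2)*a < ((max p.1 q.1 - min p.1 q.1)/a)*a := by
            exact mul_lt_mul_of_pos_right this ha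
        _ = max p.1 q.1 - min p.1 q.1 := div_mul_cancel₀ _ ha.ne'
    have hy : B < max p.2 q.2 - min p.2 q.2 := by
      have : (j:ℝ) - 2 < (max p.2 q.2 - min p.2 q.2) / b := by
        rw [sub_div]; linarith
      rw [hBdef]
      calc ((j:ℝ)-2)*b < ((max p.2 q.2 - min p.2 q.2)/b)*b := by
            exact mul_lt_mul_of_pos_right this hb
        _ = max p.2 q.2 - min p.2 q.2 := div_mul_cancel₀ _ hb.ne'
    have hxabs : max p.1 q.1 - min p.1 q.1 = |p.1 - q.1| := by
      rw [max_sub_min_eq_abs, abs_sub_comm]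
    have hyabs : max p.2 q.2 - min p.2 q.2 = |p.2 - q.2| := by
      rw [max_sub_min_eq_abs, abs_sub_comm]
    have hx2 : A^2 < (p.1 - q.1)^2 := by
      rw [hxabs] at hx
      calc A^2 < |p.1 - q.1|^2 := by exact pow_lt_pow_left₀ hx hA0 two_ne_zero
        _ = (p.1 - q.1)^2 := sq_abs _
    have hy2 : B^2 < (p.2 - q.2)^2 := by
      rw [hyabs] at hy
      calc B^2 < |p.2 - q.2|^2 := by exact pow_lt_pow_left₀ hy hB0 two_ne_zero
        _ = (p.2 - q.2)^2 := sq_abs _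
    have : Real.sqrt (A^2 + B^2) < segLen p q := by
      unfold segLen
      apply Real.sqrt_lt_sqrt (by positivity)
      linarith
    linarith
  · intro h
    have hAB : A^2 + B^2 < ℓ^2 := by
      have := (Real.sqrt_lt' hℓ).mp h
      linarith
    obtain ⟨t, ht0, hta, htb, ht1, htD'⟩ :
        ∃ t : ℝ, 0 < t ∧ t < a ∧ t < b ∧ t ≤ 1 ∧
          t * (4*(A+B+2)) ≤ ℓ^2 - A^2 - B^2 := by
      have hD : 0 < ℓ^2 - A^2 - B^2 := by linarith
      have hden : 0 < 4*(A+B+2) := by linarith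
      refine ⟨min (a/2) (min (b/2) (min 1 ((ℓ^2-A^2-B^2)/(4*(A+B+2))))), ?_, ?_, ?_, ?_, ?_⟩
      · exact lt_min (by linarith) (lt_min (by linarith) (lt_min one_pos (div_pos hD hden)))
      · exact lt_of_le_of_lt (min_le_left _ _) (by linarith)
      · exact lt_of_le_of_lt ((min_le_right _ _).trans (min_le_left _ _)) (by linarith)
      · exact (min_le_right _ _).trans ((min_le_right _ _).trans (min_le_left _ _))
      · have : min (a/2) (min (b/2) (min 1 ((ℓ^2-A^2-B^2)/(4*(A+B+2))))) ≤
            (ℓ^2-A^2-B^2)/(4*(A+B+2)) :=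
          (min_le_right _ _).trans ((min_le_right _ _).trans (min_le_right _ _))
        exact (le_div_iff₀ hden).mp this
    refine ⟨(-t, -t), (A+t, B+t), ?_, ?_, ?_, ?_⟩
    · show 0 < Real.sqrt ((-t - (A+t))^2 + (-t - (B+t))^2)
      apply Real.sqrt_pos.mpr
      nlinarith
    · show Real.sqrt ((-t - (A+t))^2 + (-t - (B+t))^2) ≤ ℓ
      have hX : (-t - (A+t))^2 + (-t - (B+t))^2 ≤ ℓ^2 := by nlinarith [sq_nonneg t]
      calc Real.sqrt _ ≤ Real.sqrt (ℓ^2) := Real.sqrt_le_sqrt hX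
        _ = ℓ := Real.sqrt_sq hℓ.le
    · show ⌈max (-t) (A+t) / a⌉ - ⌊min (-t) (A+t) / a⌋ = (i:ℤ)
      rw [max_eq_right (by linarith : -t ≤ A+t), min_eq_left (by linarith : -t ≤ A+t)]
      have hdiv : (A+t)/a = ((i:ℝ)-2) + t/a := by
        rw [hAdef, add_div, mul_div_cancel_right₀ _ ha.ne']
      have hta1 : t/a < 1 := (div_lt_one ha).mpr hta
      have hta0 : 0 < t/a := div_pos ht0 ha
      have hceil : ⌈(A+t)/a⌉ = (i:ℤ) - 1 := by
        rw [Int.ceil_eq_iff]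
        refine ⟨?_, ?_⟩ <;> · rw [hdiv]; push_cast; linarith
      have hfloor : ⌊(-t)/a⌋ = -1 := by
        have hd : (-t)/a = -(t/a) := by ring
        rw [Int.floor_eq_iff, hd]
        refine ⟨?_, ?_⟩ <;> · push_cast; linarith
      rw [hceil, hfloor]; ring
    · show ⌈max (-t) (B+t) / b⌉ - ⌊min (-t) (B+t) / b⌋ = (j:ℤ)
      rw [max_eq_right (by linarith : -t ≤ B+t), min_eq_left (by linarith : -t ≤ B+t)]
      have hdiv : (B+t)/b = ((j:ℝ)-2) + t/b := by
        rw [hBdef, add_div, mul_div_cancel_right₀ _ hb.ne']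
      have htb1 : t/b < 1 := (div_lt_one hb).mpr htb
      have htb0 : 0 < t/b := div_pos ht0 hb
      have hceil : ⌈(B+t)/b⌉ = (j:ℤ) - 1 := by
        rw [Int.ceil_eq_iff]
        refine ⟨?_, ?_⟩ <;> · rw [hdiv]; push_cast; linarith
      have hfloor : ⌊(-t)/b⌋ = -1 := by
        have hd : (-t)/b = -(t/b) := by ring
        rw [Int.floor_eq_iff, hd]
        refine ⟨?_, ?_⟩ <;> · push_cast; linarith
      rw [hceil, hfloor]; ring
end

section
/- Let a, b > 0 and let N ∈ ℕ with N ≥ 3. Define i_N = ⌊(N−3)·b²/(a²+b²) + 5/2⌋ and j_N = ⌈(N−3)·a²/(a²+b²) + 3/2⌉. Then i_N + j_N − 1 = N, and for every pair of integers (i, j) with i + j − 1 = N one has (i_N−2)²·a² + (j_N−2)²·b² ≤ (i−2)²·a² + (j−2)²·b². -/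
open Set

/-! Write `x = i - 2`, so that `j - 2 = M - x` with `M = N - 3`. Completing the square, the
objective is `(a² + b²) (x - u)² + const` with `u = M b² / (a² + b²)`, hence it is minimized over
the integers at `x = round u`; and the floor and ceiling in `i_N`, `j_N` are `round u + 2` and
`M + 2 - round u`. -/

theorem floor_add_five_halves (u : ℝ) : ⌊u + 5 / 2⌋ = round u + 2 := by
  rw [round_eq, show u + 5 / 2 = u + 1 / 2 + ((2 : ℤ) : ℝ) by push_cast; ring,
    Int.floor_add_intCast]

theorem ceil_intCast_sub_add_three_halves (m : ℤ) (u : ℝ) :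
    ⌈(m : ℝ) - u + 3 / 2⌉ = m + 2 - round u := by
  rw [round_eq, show (m : ℝ) - u + 3 / 2 = -(u + 1 / 2) + ((m + 2 : ℤ) : ℝ) by push_cast; ring,
    Int.ceil_add_intCast, Int.ceil_neg]
  ring

theorem sq_mul_add_sub_sq_mul_eq {a b : ℝ} (hc : a ^ 2 + b ^ 2 ≠ 0) (M x : ℝ) :
    x ^ 2 * a ^ 2 + (M - x) ^ 2 * b ^ 2 =
      (a ^ 2 + b ^ 2) * (x - M * b ^ 2 / (a ^ 2 + b ^ 2)) ^ 2 +
        M ^ 2 * a ^ 2 * b ^ 2 / (a ^ 2 + b ^ 2) := by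
  field_simp
  ring

theorem round_sq_mul_add_sub_sq_mul_le {a b : ℝ} (hc : 0 < a ^ 2 + b ^ 2) (M : ℝ) (n : ℤ) :
    let r : ℤ := round (M * b ^ 2 / (a ^ 2 + b ^ 2))
    (r : ℝ) ^ 2 * a ^ 2 + (M - r) ^ 2 * b ^ 2 ≤ (n : ℝ) ^ 2 * a ^ 2 + (M - n) ^ 2 * b ^ 2 := by
  intro r
  have hround : ((r : ℝ) - M * b ^ 2 / (a ^ 2 + b ^ 2)) ^ 2 ≤
      ((n : ℝ) - M * b ^ 2 / (a ^ 2 + b ^ 2)) ^ 2 := by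
    rw [sq_le_sq, abs_sub_comm, abs_sub_comm (n : ℝ)]
    exact round_le _ n
  rw [sq_mul_add_sub_sq_mul_eq hc.ne', sq_mul_add_sub_sq_mul_eq hc.ne']
  gcongr

theorem stmt_5_general (a b : ℝ) (ha : 0 < a) (N : ℕ) :
    (⌊((N : ℝ) - 3) * b ^ 2 / (a ^ 2 + b ^ 2) + 5 / 2⌋ +
      ⌈((N : ℝ) - 3) * a ^ 2 / (a ^ 2 + b ^ 2) + 3 / 2⌉ - 1 = (N : ℤ)) ∧
    ∀ i j : ℤ, i + j - 1 = (N : ℤ) →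
      ((⌊((N : ℝ) - 3) * b ^ 2 / (a ^ 2 + b ^ 2) + 5 / 2⌋ : ℝ) - 2) ^ 2 * a ^ 2 +
        ((⌈((N : ℝ) - 3) * a ^ 2 / (a ^ 2 + b ^ 2) + 3 / 2⌉ : ℝ) - 2) ^ 2 * b ^ 2 ≤
      ((i : ℝ) - 2) ^ 2 * a ^ 2 + ((j : ℝ) - 2) ^ 2 * b ^ 2 := by
  have hc : 0 < a ^ 2 + b ^ 2 := by positivity
  have hM : (N : ℝ) - 3 = ((N - 3 : ℤ) : ℝ) := by push_cast; ring
  have hsplit : ((N : ℝ) - 3) * a ^ 2 / (a ^ 2 + b ^ 2) =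
      ((N : ℝ) - 3) - ((N : ℝ) - 3) * b ^ 2 / (a ^ 2 + b ^ 2) := by
    field_simp
    ring
  rw [hsplit, floor_add_five_halves, hM, ceil_intCast_sub_add_three_halves]
  refine ⟨by ring, fun i j hij => ?_⟩
  have hj : (j : ℝ) - 2 = ((N - 3 : ℤ) : ℝ) - ((i - 2 : ℤ) : ℝ) := by
    have : (i : ℝ) + j - 1 = N := by exact_mod_cast hij
    push_cast
    linarith
  rw [hj, show (i : ℝ) - 2 = ((i - 2 : ℤ) : ℝ) by push_cast; ring]
  convert round_sq_mul_add_sub_sq_mul_le hc ((N - 3 : ℤ) : ℝ) (i - 2) using 3 <;> push_cast <;> ring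

theorem stmt_5 (a b : ℝ) (ha : 0 < a) (hb : 0 < b) (N : ℕ) (hN : 3 ≤ N) :
    (⌊((N : ℝ) - 3) * b ^ 2 / (a ^ 2 + b ^ 2) + 5 / 2⌋ +
      ⌈((N : ℝ) - 3) * a ^ 2 / (a ^ 2 + b ^ 2) + 3 / 2⌉ - 1 = (N : ℤ)) ∧
    ∀ i j : ℤ, i + j - 1 = (N : ℤ) →
      ((⌊((N : ℝ) - 3) * b ^ 2 / (a ^ 2 + b ^ 2) + 5 / 2⌋ : ℝ) - 2) ^ 2 * a ^ 2 +
        ((⌈((N : ℝ) - 3) * a ^ 2 / (a ^ 2 + b ^ 2) + 3 / 2⌉ : ℝ) - 2) ^ 2 * b ^ 2 ≤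
      ((i : ℝ) - 2) ^ 2 * a ^ 2 + ((j : ℝ) - 2) ^ 2 * b ^ 2 :=
  stmt_5_general a b ha N
end

section
/- Let a, b > 0 and let N ∈ ℕ with N ≥ 3. Define i_N = ⌊(N−3)·b²/(a²+b²) + 5/2⌋ and j_N = ⌈(N−3)·a²/(a²+b²) + 3/2⌉. Then j_N < i_N·a²/b² − 3·a²/(2·b²) + 5/2 and j_N ≥ i_N·a²/b² − 5·a²/(2·b²) + 3/2. -/
open Set

theorem stmt_6 (a b : ℝ) (ha : 0 < a) (hb : 0 < b) (N : ℕ) (hN : 3 ≤ N) :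
    ((⌈((N : ℝ) - 3) * a ^ 2 / (a ^ 2 + b ^ 2) + 3 / 2⌉ : ℝ) <
      (⌊((N : ℝ) - 3) * b ^ 2 / (a ^ 2 + b ^ 2) + 5 / 2⌋ : ℝ) * a ^ 2 / b ^ 2 -
        3 * a ^ 2 / (2 * b ^ 2) + 5 / 2) ∧
    ((⌈((N : ℝ) - 3) * a ^ 2 / (a ^ 2 + b ^ 2) + 3 / 2⌉ : ℝ) ≥
      (⌊((N : ℝ) - 3) * b ^ 2 / (a ^ 2 + b ^ 2) + 5 / 2⌋ : ℝ) * a ^ 2 / b ^ 2 -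
        5 * a ^ 2 / (2 * b ^ 2) + 3 / 2) := by
  have hb2 : (0:ℝ) < b ^ 2 := by positivity
  have hs : (0:ℝ) < a ^ 2 + b ^ 2 := by positivity
  set x : ℝ := ((N : ℝ) - 3) * b ^ 2 / (a ^ 2 + b ^ 2) with hx
  set y : ℝ := ((N : ℝ) - 3) * a ^ 2 / (a ^ 2 + b ^ 2) with hy
  have hxy : x * a ^ 2 = y * b ^ 2 := by
    field_simp [hx, hy]; ring
  have h1 : (⌊x + 5/2⌋ : ℝ) > x + 3/2 := by
    have := Int.sub_one_lt_floor (x + 5/2); linarith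
  have h2 : (⌊x + 5/2⌋ : ℝ) ≤ x + 5/2 := Int.floor_le _
  have h3 : (⌈y + 3/2⌉ : ℝ) < y + 5/2 := by
    have := Int.ceil_lt_add_one (y + 3/2); linarith
  have h4 : (⌈y + 3/2⌉ : ℝ) ≥ y + 3/2 := Int.le_ceil _
  have key1 : ((⌈y + 3/2⌉ : ℝ) - 5/2) * b ^ 2 < ((⌊x + 5/2⌋ : ℝ) - 3/2) * a ^ 2 := by
    nlinarith [sq_nonneg a]
  have key2 : ((⌊x + 5/2⌋ : ℝ) - 5/2) * a ^ 2 ≤ ((⌈y + 3/2⌉ : ℝ) - 3/2) * b ^ 2 := by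
    nlinarith [sq_nonneg a]
  constructor
  · rw [show (⌊x + 5/2⌋ : ℝ) * a ^ 2 / b ^ 2 - 3 * a ^ 2 / (2 * b ^ 2) + 5/2
        = ((⌊x + 5/2⌋ : ℝ) - 3/2) * a ^ 2 / b ^ 2 + 5/2 by field_simp]
    have : ((⌈y + 3/2⌉ : ℝ) - 5/2) < ((⌊x + 5/2⌋ : ℝ) - 3/2) * a ^ 2 / b ^ 2 := by
      rw [lt_div_iff₀ hb2]; linarith
    linarith
  · rw [show (⌊x + 5/2⌋ : ℝ) * a ^ 2 / b ^ 2 - 5 * a ^ 2 / (2 * b ^ 2) + 3/2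
        = ((⌊x + 5/2⌋ : ℝ) - 5/2) * a ^ 2 / b ^ 2 + 3/2 by field_simp]
    have : ((⌊x + 5/2⌋ : ℝ) - 5/2) * a ^ 2 / b ^ 2 ≤ ((⌈y + 3/2⌉ : ℝ) - 3/2) := by
      rw [div_le_iff₀ hb2]; linarith
    linarith
end

section
/- Let a ≥ b > 0 and ℓ > 0. Define i* = ⌈3/2 + (b/a)·√(max(ℓ²/(a²+b²) − 1/4, 0))⌉ and j* = ⌈1 + √(ℓ² − (i*−2)²·a²)/b⌉. Then the maximum number M(ℓ) of tiles of the a×b grid visited by a segment of length ℓ equals i* + j* − 1. -/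
open Set

lemma sq_lt_sq_nonneg' {U V : ℝ} (hU : 0 ≤ U) (hV : 0 ≤ V) (h : V^2 < U^2) : V < U := by
  nlinarith

lemma sq_le_sq_nonneg' {U V : ℝ} (hU : 0 ≤ U) (hV : 0 ≤ V) (h : V^2 ≤ U^2) : V ≤ U := by
  nlinarith

section Arith
variable {a b l : ℝ}

lemma step_down (hb : 0 < b) (hab : b ≤ a) {x n : ℤ} (hx : 0 ≤ x) (hn : 0 ≤ n)
    (hxE : 4*b^2*l^2 - (a^2+b^2)*b^2 ≤ (2*(x:ℝ)+1)^2*a^2*(a^2+b^2))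
    (hfeas : ((x:ℝ)+1)^2*a^2 + (n:ℝ)^2*b^2 < l^2) :
    (x:ℝ)^2*a^2 + ((n:ℝ)+1)^2*b^2 < l^2 := by
  have hX : (0:ℝ) ≤ (x:ℝ) := by exact_mod_cast hx
  have hN : (0:ℝ) ≤ (n:ℝ) := by exact_mod_cast hn
  set X := (x:ℝ)
  set N := (n:ℝ)
  have hU : 0 ≤ (2*X+1)*a^2 - b^2 := by nlinarith
  have hV : 0 ≤ 2*N*b^2 := by positivity
  have h4 : 4*b^2*(N^2*b^2) < 4*b^2*(l^2 - (X+1)^2*a^2) := by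
    have : (0:ℝ) < 4*b^2 := by positivity
    exact mul_lt_mul_of_pos_left (by linarith) this
  have hUV : (2*N*b^2)^2 < ((2*X+1)*a^2 - b^2)^2 := by nlinarith [h4, hxE]
  have key : 2*N*b^2 < (2*X+1)*a^2 - b^2 := sq_lt_sq_nonneg' hU hV hUV
  nlinarith [key, hfeas]

lemma step_up (ha : 0 < a) {y m : ℤ} (hm : 0 ≤ m)
    (hyE : 4*a^2*l^2 - (a^2+b^2)*a^2 ≤ (2*(y:ℝ)+1)^2*b^2*(a^2+b^2))
    (hsign : a^2 < (2*(y:ℝ)+1)*b^2)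
    (hfeas : (m:ℝ)^2*a^2 + ((y:ℝ)+1)^2*b^2 < l^2) :
    ((m:ℝ)+1)^2*a^2 + (y:ℝ)^2*b^2 < l^2 := by
  have hM : (0:ℝ) ≤ (m:ℝ) := by exact_mod_cast hm
  set Y := (y:ℝ)
  set M := (m:ℝ)
  have hU : 0 ≤ (2*Y+1)*b^2 - a^2 := le_of_lt (by linarith)
  have hV : 0 ≤ 2*M*a^2 := by positivity
  have h4 : 4*a^2*(M^2*a^2) < 4*a^2*(l^2 - (Y+1)^2*b^2) := by
    have : (0:ℝ) < 4*a^2 := by positivity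
    exact mul_lt_mul_of_pos_left (by linarith) this
  have hUV : (2*M*a^2)^2 < ((2*Y+1)*b^2 - a^2)^2 := by nlinarith [h4, hyE]
  have key : 2*M*a^2 < (2*Y+1)*b^2 - a^2 := sq_lt_sq_nonneg' hU hV hUV
  nlinarith [key, hfeas]

set_option maxHeartbeats 4000000 in
lemma arith_part1 (a b l : ℝ) (hb : 0 < b) (hab : b ≤ a) (hl : 0 < l)
    (istar jstar : ℤ)
    (histar : istar =
      ⌈(3 : ℝ) / 2 + (b / a) * Real.sqrt (max (l ^ 2 / (a ^ 2 + b ^ 2) - 1 / 4) 0)⌉)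
    (hjstar : jstar =
      ⌈(1 : ℝ) + Real.sqrt (l ^ 2 - ((istar : ℝ) - 2) ^ 2 * a ^ 2) / b⌉) :
    2 ≤ istar ∧ 2 ≤ jstar ∧
    ∃ G s : ℝ, 0 ≤ G ∧ (l^2/(a^2+b^2) - 1/4 ≤ G^2) ∧
      ((istar:ℝ)-2 < 1/2 + (b/a)*G) ∧
      0 < s ∧ s^2 = l^2 - ((istar:ℝ)-2)^2*a^2 ∧ s ≤ ((jstar:ℝ)-1)*b ∧
      (((jstar:ℝ)-2)*b < s) ∧ (a*G - b/2 < s) ∧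
      (∀ x : ℤ, istar - 2 ≤ x →
        4*b^2*l^2 - (a^2+b^2)*b^2 ≤ (2*(x:ℝ)+1)^2*a^2*(a^2+b^2)) := by
  have ha : 0 < a := lt_of_lt_of_le hb hab
  have hA : (0:ℝ) < a^2+b^2 := by positivity
  obtain ⟨G, hGdef⟩ : ∃ G:ℝ, G = Real.sqrt (max (l ^ 2 / (a ^ 2 + b ^ 2) - 1 / 4) 0) := ⟨_, rfl⟩
  rw [← hGdef] at histar
  have hG0 : 0 ≤ G := by rw [hGdef]; exact Real.sqrt_nonneg _
  have hGsq : G^2 = max (l ^ 2 / (a ^ 2 + b ^ 2) - 1 / 4) 0 := by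
    rw [hGdef]; exact Real.sq_sqrt (le_max_right _ _)
  have hGE : l ^ 2 / (a ^ 2 + b ^ 2) - 1 / 4 ≤ G^2 := by rw [hGsq]; exact le_max_left _ _
  have hEA : (l^2/(a^2+b^2) - 1/4)*(a^2+b^2) = l^2 - (a^2+b^2)/4 := by field_simp
  have hmlb : -(1:ℝ)/2 + (b/a)*G ≤ (istar:ℝ) - 2 := by
    have h := Int.le_ceil ((3:ℝ)/2 + (b/a)*G)
    rw [← histar] at h; linarith
  have hmub : (istar:ℝ) - 2 < 1/2 + (b/a)*G := by
    have h := Int.ceil_lt_add_one ((3:ℝ)/2 + (b/a)*G)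
    rw [← histar] at h; linarith
  have hi2 : 2 ≤ istar := by
    rw [histar]
    have h1 : (1:ℤ) < ⌈(3:ℝ)/2 + (b/a)*G⌉ := by
      rw [Int.lt_ceil]
      have : 0 ≤ (b/a)*G := by positivity
      push_cast; linarith
    omega
  obtain ⟨M, hMdef⟩ : ∃ M:ℝ, M = (istar:ℝ) - 2 := ⟨_, rfl⟩
  rw [← hMdef] at hjstar hmlb hmub
  have hM0 : (0:ℝ) ≤ M := by
    have h : ((2:ℤ):ℝ) ≤ (istar:ℝ) := by exact_mod_cast hi2
    rw [hMdef]; push_cast at h; linarith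
  have hMal : M*a < l := by
    rcases le_or_gt (l ^ 2 / (a ^ 2 + b ^ 2) - 1 / 4) 0 with hE | hE
    · have hGz : G = 0 := by rw [hGdef, max_eq_right hE, Real.sqrt_zero]
      have h1 : M < 1 := by rw [hGz] at hmub; nlinarith [hmub]
      have h2 : istar - 2 < 1 := by
        exact_mod_cast (by push_cast; rw [hMdef] at h1; linarith : ((istar - 2 : ℤ):ℝ) < 1)
      have h3 : istar = 2 := by omega
      have h4 : M = 0 := by rw [hMdef, h3]; norm_num
      rw [h4]; nlinarith
    · have hG2 : G^2 = l ^ 2 / (a ^ 2 + b ^ 2) - 1 / 4 := by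
        rw [hGsq, max_eq_left (le_of_lt hE)]
      have hGA : G^2*(a^2+b^2) = l^2 - (a^2+b^2)/4 := by rw [hG2]; exact hEA
      have hl2 : (a^2+b^2)/4 < l^2 := by nlinarith [hGA, sq_nonneg G]
      have hla : a/2 < l := by nlinarith
      have hbG : b*G ≤ l - a/2 := by
        have e1 : b^2*G^2*(a^2+b^2) = b^2*(l^2 - (a^2+b^2)/4) := by
          rw [show b^2*G^2*(a^2+b^2) = b^2*(G^2*(a^2+b^2)) by ring, hGA]
        have key : (l - a/2)^2*(a^2+b^2) - (b*G)^2*(a^2+b^2) = (l*a - (a^2+b^2)/2)^2 := by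
          calc (l - a/2)^2*(a^2+b^2) - (b*G)^2*(a^2+b^2)
              = (l - a/2)^2*(a^2+b^2) - b^2*(l^2-(a^2+b^2)/4) := by rw [← e1]; ring
            _ = (l*a - (a^2+b^2)/2)^2 := by ring
        have h2 : (b*G)^2*(a^2+b^2) ≤ (l - a/2)^2*(a^2+b^2) := by
          linarith [sq_nonneg (l*a - (a^2+b^2)/2), key]
        have h1 : (b*G)^2 ≤ (l - a/2)^2 := le_of_mul_le_mul_right h2 hA
        exact sq_le_sq_nonneg' (by linarith) (by positivity) h1
      have h5 : M*a < (1/2 + (b/a)*G)*a := mul_lt_mul_of_pos_right hmub ha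
      have heq : (1/2 + (b/a)*G)*a = a/2 + b*G := by field_simp
      rw [heq] at h5; linarith
  have hMa0 : 0 ≤ M*a := by positivity
  have hsarg : 0 < l^2 - M^2*a^2 := by nlinarith
  obtain ⟨s, hsdef⟩ : ∃ s:ℝ, s = Real.sqrt (l ^ 2 - M ^ 2 * a ^ 2) := ⟨_, rfl⟩
  rw [← hsdef] at hjstar
  have hs0 : 0 ≤ s := by rw [hsdef]; exact Real.sqrt_nonneg _
  have hs2 : s^2 = l^2 - M^2*a^2 := by rw [hsdef]; exact Real.sq_sqrt (le_of_lt hsarg)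
  have hspos : 0 < s := by rw [hsdef]; exact Real.sqrt_pos.mpr hsarg
  have hjeq : jstar = ⌈s/b⌉ + 1 := by
    rw [hjstar, show (1:ℝ) + s/b = s/b + 1 by ring, Int.ceil_add_one]
  have hj2 : 2 ≤ jstar := by
    rw [hjeq]
    have : (0:ℤ) < ⌈s/b⌉ := by rw [Int.lt_ceil]; push_cast; positivity
    omega
  obtain ⟨N, hNdef⟩ : ∃ N:ℝ, N = (jstar:ℝ) - 2 := ⟨_, rfl⟩
  have hN0 : (0:ℝ) ≤ N := by
    have h : ((2:ℤ):ℝ) ≤ (jstar:ℝ) := by exact_mod_cast hj2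
    rw [hNdef]; push_cast at h; linarith
  have hNlt : N*b < s := by
    have h1 : ((⌈s/b⌉:ℤ):ℝ) < s/b + 1 := Int.ceil_lt_add_one _
    have h2 : N = ((⌈s/b⌉:ℤ):ℝ) - 1 := by rw [hNdef, hjeq]; push_cast; ring
    rw [h2]
    have h3 : (((⌈s/b⌉:ℤ):ℝ) - 1) * b < (s/b) * b :=
      mul_lt_mul_of_pos_right (by linarith) hb
    rwa [div_mul_cancel₀ s (ne_of_gt hb)] at h3
  have hNge : s ≤ (N+1)*b := by
    have h1 : s/b ≤ ((⌈s/b⌉:ℤ):ℝ) := Int.le_ceil _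
    have h2 : N + 1 = ((⌈s/b⌉:ℤ):ℝ) := by rw [hNdef, hjeq]; push_cast; ring
    rw [h2]
    calc s = (s/b)*b := by field_simp
    _ ≤ ((⌈s/b⌉:ℤ):ℝ)*b := mul_le_mul_of_nonneg_right h1 (le_of_lt hb)
  have feasB : M^2*a^2 + N^2*b^2 < l^2 := by
    have h1 : (N*b)^2 < s^2 := by nlinarith [mul_nonneg hN0 (le_of_lt hb)]
    nlinarith [h1]
  have hK1 : a*G - b/2 < s := by
    rcases le_or_gt (a*G) (b/2) with h | h
    · linarith
    · have hGpos : 0 < G := by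
        rcases lt_or_eq_of_le hG0 with h' | h'
        · exact h'
        · exfalso; rw [← h'] at h; simp at h; linarith
      have hEpos : 0 < l ^ 2 / (a ^ 2 + b ^ 2) - 1 / 4 := by
        by_contra hng
        push_neg at hng
        have : G = 0 := by rw [hGdef, max_eq_right hng, Real.sqrt_zero]
        rw [this] at hGpos; linarith
      have hG2 : G^2 = l ^ 2 / (a ^ 2 + b ^ 2) - 1 / 4 := by
        rw [hGsq, max_eq_left (le_of_lt hEpos)]
      have hGA : G^2*(a^2+b^2) = l^2 - (a^2+b^2)/4 := by rw [hG2]; exact hEA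
      have hMub2 : M^2*a^2 < (a/2 + b*G)^2 := by
        have h2 : M^2 < (1/2 + (b/a)*G)^2 := by nlinarith [hmub, hM0]
        have h3 : M^2*a^2 < (1/2 + (b/a)*G)^2*a^2 :=
          mul_lt_mul_of_pos_right h2 (by positivity)
        have h4 : (1/2 + (b/a)*G)^2*a^2 = (a/2 + b*G)^2 := by field_simp
        linarith [h4 ▸ h3]
      have hsq : (a*G - b/2)^2 < s^2 := by rw [hs2]; nlinarith [hGA, hMub2]
      exact sq_lt_sq_nonneg' hs0 (by linarith) hsq
  have hXElem : ∀ x : ℤ, istar - 2 ≤ x →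
      4*b^2*l^2 - (a^2+b^2)*b^2 ≤ (2*(x:ℝ)+1)^2*a^2*(a^2+b^2) := by
    intro x hx
    have hxR : M ≤ (x:ℝ) := by
      have h : ((istar - 2 : ℤ):ℝ) ≤ (x:ℝ) := by exact_mod_cast hx
      push_cast at h; rw [hMdef]; linarith
    have h1 : (b/a)*G ≤ (x:ℝ) + 1/2 := by linarith [hmlb]
    have hbaG : 0 ≤ (b/a)*G := by positivity
    have h2 : ((b/a)*G)^2 ≤ ((x:ℝ)+1/2)^2 := by nlinarith
    have h5 : b^2*G^2 ≤ ((x:ℝ)+1/2)^2*a^2 := by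
      have h3 : ((b/a)*G)^2*a^2 = b^2*G^2 := by field_simp
      nlinarith [mul_le_mul_of_nonneg_right h2 (le_of_lt (by positivity : (0:ℝ) < a^2))]
    have h6 : b^2*(l ^ 2 / (a ^ 2 + b ^ 2) - 1 / 4) ≤ b^2*G^2 := by nlinarith [hGE]
    have h7 : b^2*((l ^ 2 / (a ^ 2 + b ^ 2) - 1 / 4)*(a^2+b^2)) = b^2*(l^2 - (a^2+b^2)/4) := by
      rw [hEA]
    nlinarith [mul_le_mul_of_nonneg_right (le_trans h6 h5) (le_of_lt hA), h7]
  refine ⟨hi2, hj2, G, s, hG0, hGE, ?_, hspos, ?_, ?_, ?_, hK1, hXElem⟩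
  · rw [← hMdef]; exact hmub
  · rw [← hMdef]; exact hs2
  · have h : ((jstar:ℝ)-1) = N + 1 := by rw [hNdef]; ring
    rw [h]; exact hNge
  · have h : ((jstar:ℝ)-2) = N := by rw [hNdef]
    rw [h]; exact hNlt

set_option maxHeartbeats 2000000 in
lemma arith_main (a b l : ℝ) (hb : 0 < b) (hab : b ≤ a) (hl : 0 < l)
    (istar jstar : ℤ)
    (histar : istar =
      ⌈(3 : ℝ) / 2 + (b / a) * Real.sqrt (max (l ^ 2 / (a ^ 2 + b ^ 2) - 1 / 4) 0)⌉)
    (hjstar : jstar =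
      ⌈(1 : ℝ) + Real.sqrt (l ^ 2 - ((istar : ℝ) - 2) ^ 2 * a ^ 2) / b⌉) :
    2 ≤ istar ∧ 2 ≤ jstar ∧
    (((istar:ℝ)-2)^2*a^2 + ((jstar:ℝ)-2)^2*b^2 < l^2) ∧
    (∀ m n : ℤ, 0 ≤ m → 0 ≤ n → (m:ℝ)^2*a^2 + (n:ℝ)^2*b^2 < l^2 →
      m + n ≤ (istar - 2) + (jstar - 2)) := by
  have ha : 0 < a := lt_of_lt_of_le hb hab
  have hA : (0:ℝ) < a^2+b^2 := by positivity
  obtain ⟨hi2, hj2, G, s, hG0, hGE, hmub', hspos, hs2', hNge', hNlt', hK1, hXElem⟩ :=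
    arith_part1 a b l hb hab hl istar jstar histar hjstar
  have hEA : (l^2/(a^2+b^2) - 1/4)*(a^2+b^2) = l^2 - (a^2+b^2)/4 := by field_simp
  obtain ⟨M, hMdef⟩ : ∃ M:ℝ, M = (istar:ℝ) - 2 := ⟨_, rfl⟩
  obtain ⟨N, hNdef⟩ : ∃ N:ℝ, N = (jstar:ℝ) - 2 := ⟨_, rfl⟩
  have hmub : M < 1/2 + (b/a)*G := by rw [hMdef]; exact hmub'
  have hs2 : s^2 = l^2 - M^2*a^2 := by rw [hMdef]; exact hs2'
  have hNge : s ≤ (N+1)*b := by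
    rw [hNdef, show ((jstar:ℝ)-2+1) = (jstar:ℝ)-1 by ring]; exact hNge'
  have hNlt : N*b < s := by rw [hNdef]; exact hNlt'
  have hs0 : 0 ≤ s := le_of_lt hspos
  have hM0 : (0:ℝ) ≤ M := by
    have h : ((2:ℤ):ℝ) ≤ (istar:ℝ) := by exact_mod_cast hi2
    push_cast at h; rw [hMdef]; linarith
  have hN0 : (0:ℝ) ≤ N := by
    have h : ((2:ℤ):ℝ) ≤ (jstar:ℝ) := by exact_mod_cast hj2
    push_cast at h; rw [hNdef]; linarith
  have feasB : M^2*a^2 + N^2*b^2 < l^2 := by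
    have h1 : (N*b)^2 < s^2 := by nlinarith [mul_nonneg hN0 (le_of_lt hb)]
    nlinarith [h1]
  refine ⟨hi2, hj2, ?_, ?_⟩
  · rw [← hMdef, ← hNdef]; exact feasB
  have hYElem : ∀ y : ℤ, jstar - 1 ≤ y →
      4*a^2*l^2 - (a^2+b^2)*a^2 ≤ (2*(y:ℝ)+1)^2*b^2*(a^2+b^2) := by
    intro y hy
    have hyR : N + 1 ≤ (y:ℝ) := by
      have h : ((jstar - 1 : ℤ):ℝ) ≤ (y:ℝ) := by exact_mod_cast hy
      push_cast at h; rw [hNdef]; linarith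
    have hyb : (N+1)*b ≤ (y:ℝ)*b := mul_le_mul_of_nonneg_right hyR (le_of_lt hb)
    have h1 : 2*a*G < (2*(y:ℝ)+1)*b := by nlinarith [hK1, hNge]
    have h1' : 0 ≤ 2*a*G := by positivity
    have h2 : (2*a*G)^2 < ((2*(y:ℝ)+1)*b)^2 := by nlinarith
    have h3 : 4*a^2*G^2 ≤ (2*(y:ℝ)+1)^2*b^2 := by nlinarith
    have h6 : 4*a^2*(l ^ 2 / (a ^ 2 + b ^ 2) - 1 / 4) ≤ 4*a^2*G^2 :=
      mul_le_mul_of_nonneg_left hGE (by positivity)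
    have h5 := mul_le_mul_of_nonneg_right (le_trans h6 h3) (le_of_lt hA)
    have h8 : 4*a^2*((l ^ 2 / (a ^ 2 + b ^ 2) - 1 / 4)*(a^2+b^2))
        = 4*a^2*(l^2 - (a^2+b^2)/4) := by rw [hEA]
    linarith [h5, h8]
  have hsign2 : ∀ y : ℤ, jstar - 1 ≤ y → 3 ≤ istar → a^2 < (2*(y:ℝ)+1)*b^2 := by
    intro y hy hi3
    have hM1 : (1:ℝ) ≤ M := by
      have h : ((3:ℤ):ℝ) ≤ (istar:ℝ) := by exact_mod_cast hi3
      rw [hMdef]; push_cast at h; linarith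
    have hid : (b/a)*G*a = b*G := by field_simp
    have hhalf : a/2 < b*G := by
      have h1 : (1:ℝ)/2 < (b/a)*G := by linarith
      have h2 := mul_lt_mul_of_pos_right h1 ha
      rw [hid] at h2; linarith
    have hyR : N + 1 ≤ (y:ℝ) := by
      have h : ((jstar - 1 : ℤ):ℝ) ≤ (y:ℝ) := by exact_mod_cast hy
      push_cast at h; rw [hNdef]; linarith
    have hyb : (N+1)*b ≤ (y:ℝ)*b := mul_le_mul_of_nonneg_right hyR (le_of_lt hb)
    have h1 : 2*a*G < (2*(y:ℝ)+1)*b := by nlinarith [hK1, hNge]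
    -- a² < (2y+1)b² ⟸ a²/b < (2y+1)b ⟸ a² < 2abG
    have h2 : a*a < 2*a*(b*G) := by nlinarith
    have h3 : 2*a*(b*G) = (2*a*G)*b := by ring
    nlinarith [mul_lt_mul_of_pos_right h1 hb]
  have C1 : ∀ d : ℕ, ∀ k : ℤ, 0 ≤ k →
      ((istar - 2 + (d:ℤ) : ℤ):ℝ)^2*a^2 + (k:ℝ)^2*b^2 < l^2 →
      M^2*a^2 + ((k + (d:ℤ) : ℤ):ℝ)^2*b^2 < l^2 := by
    intro d
    induction d with
    | zero =>
      intro k hk h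
      rw [hMdef]; push_cast at h ⊢; convert h using 3 <;> ring
    | succ d ih =>
      intro k hk h
      have hx : (0:ℤ) ≤ istar - 2 + (d:ℤ) := by omega
      have hcst : ((istar - 2 + ((d:ℕ)+1:ℕ) : ℤ):ℝ) = ((istar - 2 + (d:ℤ) : ℤ):ℝ) + 1 := by
        push_cast; ring
      rw [hcst] at h
      have step := step_down hb hab hx hk (hXElem _ (by omega)) h
      have step' : ((istar - 2 + (d:ℤ) : ℤ):ℝ)^2*a^2 + (((k+1:ℤ)):ℝ)^2*b^2 < l^2 := by
        push_cast at step ⊢; linarith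
      have res := ih (k+1) (by omega) step'
      rw [show (k + (((d:ℕ)+1:ℕ):ℤ) : ℤ) = (k+1) + (d:ℤ) from by push_cast; ring]
      exact res
  have C2 : ∀ e : ℕ, ∀ k : ℤ, 0 ≤ k → 3 ≤ istar →
      (k:ℝ)^2*a^2 + ((jstar - 1 + (e:ℤ) : ℤ):ℝ)^2*b^2 < l^2 →
      ((k + (e:ℤ) : ℤ):ℝ)^2*a^2 + ((jstar - 1:ℤ):ℝ)^2*b^2 < l^2 := by
    intro e
    induction e with
    | zero =>
      intro k hk hi3 h
      push_cast at h ⊢; convert h using 3 <;> ring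
    | succ e ih =>
      intro k hk hi3 h
      have hcst : ((jstar - 1 + ((e:ℕ)+1:ℕ) : ℤ):ℝ) = ((jstar - 1 + (e:ℤ) : ℤ):ℝ) + 1 := by
        push_cast; ring
      rw [hcst] at h
      have step := step_up ha (m := k) (y := jstar - 1 + (e:ℤ)) hk
        (hYElem _ (by omega)) (hsign2 _ (by omega) hi3) h
      have step' : ((k+1:ℤ):ℝ)^2*a^2 + ((jstar - 1 + (e:ℤ) : ℤ):ℝ)^2*b^2 < l^2 := by
        push_cast at step ⊢; linarith
      have res := ih (k+1) (by omega) hi3 step'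
      rw [show (k + (((e:ℕ)+1:ℕ):ℤ) : ℤ) = (k+1) + (e:ℤ) from by push_cast; ring]
      exact res
  -- final conclusion
  intro m n hm hn hfeas
  by_contra hgt
  push_neg at hgt
  obtain ⟨m', n', hm'0, hn'0, hmle, hnle, hsum⟩ :
      ∃ m' n' : ℤ, 0 ≤ m' ∧ 0 ≤ n' ∧ m' ≤ m ∧ n' ≤ n ∧
        m' + n' = istar - 2 + (jstar - 2) + 1 := by
    refine ⟨min m (istar - 2 + (jstar - 2) + 1),
      istar - 2 + (jstar - 2) + 1 - min m (istar - 2 + (jstar - 2) + 1),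
      by omega, by omega, by omega, by omega, by omega⟩
  have hfeas' : (m':ℝ)^2*a^2 + (n':ℝ)^2*b^2 < l^2 := by
    have c1 : (m':ℝ) ≤ (m:ℝ) := by exact_mod_cast hmle
    have c2 : (n':ℝ) ≤ (n:ℝ) := by exact_mod_cast hnle
    have c3 : (0:ℝ) ≤ (m':ℝ) := by exact_mod_cast hm'0
    have c4 : (0:ℝ) ≤ (n':ℝ) := by exact_mod_cast hn'0
    have h1 : (m':ℝ)^2 ≤ (m:ℝ)^2 := by nlinarith
    have h2 : (n':ℝ)^2 ≤ (n:ℝ)^2 := by nlinarith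
    have h1' := mul_le_mul_of_nonneg_right h1 (sq_nonneg a)
    have h2' := mul_le_mul_of_nonneg_right h2 (sq_nonneg b)
    linarith [hfeas]
  have hNcontr : M^2*a^2 + ((jstar - 1 : ℤ):ℝ)^2*b^2 < l^2 → False := by
    intro h
    have hcast : ((jstar - 1 : ℤ):ℝ) = N + 1 := by rw [hNdef]; push_cast; ring
    rw [hcast] at h
    have h2 : ((N+1)*b)^2 < s^2 := by rw [hs2]; nlinarith [h]
    have h3 : (N+1)*b < s :=
      sq_lt_sq_nonneg' hs0 (mul_nonneg (by linarith) (le_of_lt hb)) h2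
    linarith [hNge]
  rcases le_or_gt (istar - 2) m' with hc | hc
  · have hd : m' = istar - 2 + (((m' - (istar-2)).toNat : ℕ) : ℤ) := by omega
    have hin : ((istar - 2 + (((m' - (istar-2)).toNat : ℕ):ℤ) : ℤ):ℝ)^2*a^2
        + (n':ℝ)^2*b^2 < l^2 := by rw [← hd]; exact hfeas'
    have h := C1 _ n' hn'0 hin
    have he : n' + (((m' - (istar-2)).toNat : ℕ) : ℤ) = jstar - 1 := by omega
    rw [he] at h
    exact hNcontr h
  · have hi3 : 3 ≤ istar := by omega
    have hd : n' = jstar - 1 + (((istar - 2 - m').toNat : ℕ) : ℤ) := by omega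
    have hin : (m':ℝ)^2*a^2
        + ((jstar - 1 + (((istar - 2 - m').toNat : ℕ):ℤ) : ℤ):ℝ)^2*b^2 < l^2 := by
      rw [← hd]; exact hfeas'
    have h := C2 _ m' hm'0 hi3 hin
    have he : m' + (((istar - 2 - m').toNat : ℕ) : ℤ) = istar - 2 := by omega
    rw [he] at h
    have hcast2 : ((istar - 2:ℤ):ℝ) = M := by rw [hMdef]; push_cast; ring
    rw [hcast2] at h
    exact hNcontr h

end Arith
lemma seg_mem {p q z : ℝ×ℝ} (h : z ∈ segment ℝ p q) :
    ∃ t ∈ Icc (0:ℝ) 1, z = p + t • (q - p) := by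
  rw [segment_eq_image' ℝ p q] at h
  obtain ⟨t, ht, hz⟩ := h
  exact ⟨t, ht, hz.symm⟩

lemma affine_lb (x y t : ℝ) (h0 : 0 ≤ t) (h1 : t ≤ 1) : min x y ≤ x + t*(y-x) := by
  rcases le_total x y with h | h
  · rw [min_eq_left h]; nlinarith
  · rw [min_eq_right h]; nlinarith

lemma affine_ub (x y t : ℝ) (h0 : 0 ≤ t) (h1 : t ≤ 1) : x + t*(y-x) ≤ max x y := by
  rcases le_total x y with h | h
  · rw [max_eq_right h]; nlinarith
  · rw [max_eq_left h]; nlinarith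

lemma coord1 (p q : ℝ×ℝ) (t : ℝ) : (p + t • (q - p)).1 = p.1 + t*(q.1-p.1) := by
  simp [Prod.fst_add, Prod.fst_sub, smul_eq_mul]

lemma coord2 (p q : ℝ×ℝ) (t : ℝ) : (p + t • (q - p)).2 = p.2 + t*(q.2-p.2) := by
  simp [Prod.snd_add, Prod.snd_sub, smul_eq_mul]

section UB
variable {a b : ℝ}

lemma visit_subset_box (ha : 0 < a) (hb : 0 < b) (p q : ℝ×ℝ) :
    {kl : ℤ × ℤ | (segment ℝ p q ∩ tileInt a b kl.1 kl.2).Nonempty} ⊆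
      (Icc ⌊min p.1 q.1 / a⌋ (⌈max p.1 q.1 / a⌉ - 1)) ×ˢ
      (Icc ⌊min p.2 q.2 / b⌋ (⌈max p.2 q.2 / b⌉ - 1)) := by
  rintro ⟨k, l⟩ ⟨z, hzseg, hztile⟩
  obtain ⟨t, ⟨ht0, ht1⟩, rfl⟩ := seg_mem hzseg
  obtain ⟨⟨hx1, hx2⟩, ⟨hy1, hy2⟩⟩ := hztile
  rw [coord1] at hx1 hx2
  rw [coord2] at hy1 hy2
  have hminx : min p.1 q.1 ≤ p.1 + t*(q.1-p.1) := affine_lb _ _ _ ht0 ht1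
  have hmaxx : p.1 + t*(q.1-p.1) ≤ max p.1 q.1 := affine_ub _ _ _ ht0 ht1
  have hminy : min p.2 q.2 ≤ p.2 + t*(q.2-p.2) := affine_lb _ _ _ ht0 ht1
  have hmaxy : p.2 + t*(q.2-p.2) ≤ max p.2 q.2 := affine_ub _ _ _ ht0 ht1
  constructor
  · constructor
    · -- ⌊min/a⌋ ≤ k
      have h1 : (⌊min p.1 q.1 / a⌋ : ℝ) ≤ min p.1 q.1 / a := Int.floor_le _
      have h2 : min p.1 q.1 / a < (k:ℝ) + 1 := by
        rw [div_lt_iff₀ ha]; linarith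
      have : (⌊min p.1 q.1 / a⌋ : ℝ) < (k:ℝ) + 1 := lt_of_le_of_lt h1 h2
      have := lt_of_le_of_lt h1 h2
      exact_mod_cast Int.lt_add_one_iff.mp (by exact_mod_cast this)
    · -- k ≤ ⌈max/a⌉ - 1
      have h1 : (k:ℝ) < max p.1 q.1 / a := by
        rw [lt_div_iff₀ ha]; linarith
      have h2 : max p.1 q.1 / a ≤ (⌈max p.1 q.1 / a⌉ : ℝ) := Int.le_ceil _
      have h3 : (k:ℝ) < (⌈max p.1 q.1 / a⌉ : ℝ) := lt_of_lt_of_le h1 h2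
      have h4 : k < ⌈max p.1 q.1 / a⌉ := by exact_mod_cast h3
      omega
  · constructor
    · have h1 : (⌊min p.2 q.2 / b⌋ : ℝ) ≤ min p.2 q.2 / b := Int.floor_le _
      have h2 : min p.2 q.2 / b < (l:ℝ) + 1 := by
        rw [div_lt_iff₀ hb]; linarith
      have := lt_of_le_of_lt h1 h2
      exact_mod_cast Int.lt_add_one_iff.mp (by exact_mod_cast this)
    · have h1 : (l:ℝ) < max p.2 q.2 / b := by
        rw [lt_div_iff₀ hb]; linarith
      have h2 : max p.2 q.2 / b ≤ (⌈max p.2 q.2 / b⌉ : ℝ) := Int.le_ceil _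
      have h3 : (l:ℝ) < (⌈max p.2 q.2 / b⌉ : ℝ) := lt_of_lt_of_le h1 h2
      have h4 : l < ⌈max p.2 q.2 / b⌉ := by exact_mod_cast h3
      omega

lemma visit_finite (ha : 0 < a) (hb : 0 < b) (p q : ℝ×ℝ) :
    {kl : ℤ × ℤ | (segment ℝ p q ∩ tileInt a b kl.1 kl.2).Nonempty}.Finite :=
  Set.Finite.subset (Set.Finite.prod (Set.finite_Icc _ _) (Set.finite_Icc _ _))
    (visit_subset_box ha hb p q)

lemma visit_chain (ha : 0 < a) (hb : 0 < b) (p q : ℝ×ℝ) {k l k' l' : ℤ}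
    (h : (segment ℝ p q ∩ tileInt a b k l).Nonempty)
    (h' : (segment ℝ p q ∩ tileInt a b k' l').Nonempty)
    (hsign : 0 ≤ (q.1 - p.1) * (q.2 - p.2)) :
    (k ≤ k' ∧ l ≤ l') ∨ (k' ≤ k ∧ l' ≤ l) := by
  obtain ⟨z, hzseg, ⟨hx1, hx2⟩, ⟨hy1, hy2⟩⟩ := h
  obtain ⟨z', hzseg', ⟨hx1', hx2'⟩, ⟨hy1', hy2'⟩⟩ := h'
  obtain ⟨t, ⟨ht0, ht1⟩, rfl⟩ := seg_mem hzseg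
  obtain ⟨t', ⟨ht0', ht1'⟩, rfl⟩ := seg_mem hzseg'
  rw [coord1] at hx1 hx2 hx1' hx2'
  rw [coord2] at hy1 hy2 hy1' hy2'
  have hprod : 0 ≤ ((p.1 + t'*(q.1-p.1)) - (p.1 + t*(q.1-p.1))) *
      ((p.2 + t'*(q.2-p.2)) - (p.2 + t*(q.2-p.2))) := by
    have : ((p.1 + t'*(q.1-p.1)) - (p.1 + t*(q.1-p.1))) *
        ((p.2 + t'*(q.2-p.2)) - (p.2 + t*(q.2-p.2))) = (t'-t)^2 * ((q.1-p.1)*(q.2-p.2)) := by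
      ring
    rw [this]
    exact mul_nonneg (sq_nonneg _) hsign
  have keyk : ∀ {u v : ℤ}, (u:ℝ)*a < ((v:ℝ)+1)*a → u ≤ v := by
    intro u v h
    have h2 : (u:ℝ) < (v:ℝ)+1 := lt_of_mul_lt_mul_right (by linarith) (le_of_lt ha)
    exact_mod_cast Int.lt_add_one_iff.mp (by exact_mod_cast h2)
  have keyl : ∀ {u v : ℤ}, (u:ℝ)*b < ((v:ℝ)+1)*b → u ≤ v := by
    intro u v h
    have h2 : (u:ℝ) < (v:ℝ)+1 := lt_of_mul_lt_mul_right (by linarith) (le_of_lt hb)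
    exact_mod_cast Int.lt_add_one_iff.mp (by exact_mod_cast h2)
  rcases mul_nonneg_iff.mp hprod with ⟨hd1, hd2⟩ | ⟨hd1, hd2⟩
  · left
    exact ⟨keyk (by linarith), keyl (by linarith)⟩
  · right
    exact ⟨keyk (by linarith), keyl (by linarith)⟩

end UB

section UB2
variable {a b : ℝ}

lemma visit_chain_neg (ha : 0 < a) (hb : 0 < b) (p q : ℝ×ℝ) {k l k' l' : ℤ}
    (h : (segment ℝ p q ∩ tileInt a b k l).Nonempty)
    (h' : (segment ℝ p q ∩ tileInt a b k' l').Nonempty)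
    (hsign : (q.1 - p.1) * (q.2 - p.2) ≤ 0) :
    (k ≤ k' ∧ l' ≤ l) ∨ (k' ≤ k ∧ l ≤ l') := by
  obtain ⟨z, hzseg, ⟨hx1, hx2⟩, ⟨hy1, hy2⟩⟩ := h
  obtain ⟨z', hzseg', ⟨hx1', hx2'⟩, ⟨hy1', hy2'⟩⟩ := h'
  obtain ⟨t, ⟨ht0, ht1⟩, rfl⟩ := seg_mem hzseg
  obtain ⟨t', ⟨ht0', ht1'⟩, rfl⟩ := seg_mem hzseg'
  rw [coord1] at hx1 hx2 hx1' hx2'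
  rw [coord2] at hy1 hy2 hy1' hy2'
  have hprod : ((p.1 + t'*(q.1-p.1)) - (p.1 + t*(q.1-p.1))) *
      ((p.2 + t'*(q.2-p.2)) - (p.2 + t*(q.2-p.2))) ≤ 0 := by
    have heq : ((p.1 + t'*(q.1-p.1)) - (p.1 + t*(q.1-p.1))) *
        ((p.2 + t'*(q.2-p.2)) - (p.2 + t*(q.2-p.2))) = (t'-t)^2 * ((q.1-p.1)*(q.2-p.2)) := by
      ring
    rw [heq]
    exact mul_nonpos_of_nonneg_of_nonpos (sq_nonneg _) hsign
  have keyk : ∀ {u v : ℤ}, (u:ℝ)*a < ((v:ℝ)+1)*a → u ≤ v := by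
    intro u v h
    have h2 : (u:ℝ) < (v:ℝ)+1 := lt_of_mul_lt_mul_right (by linarith) (le_of_lt ha)
    exact_mod_cast Int.lt_add_one_iff.mp (by exact_mod_cast h2)
  have keyl : ∀ {u v : ℤ}, (u:ℝ)*b < ((v:ℝ)+1)*b → u ≤ v := by
    intro u v h
    have h2 : (u:ℝ) < (v:ℝ)+1 := lt_of_mul_lt_mul_right (by linarith) (le_of_lt hb)
    exact_mod_cast Int.lt_add_one_iff.mp (by exact_mod_cast h2)
  rcases mul_nonpos_iff.mp hprod with ⟨hd1, hd2⟩ | ⟨hd1, hd2⟩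
  · left
    exact ⟨keyk (by linarith), keyl (by linarith)⟩
  · right
    exact ⟨keyk (by linarith), keyl (by linarith)⟩

lemma visit_le (ha : 0 < a) (hb : 0 < b) (p q : ℝ×ℝ) :
    (visitCount a b p q : ℤ) ≤ max (normWidth a p q + normHeight b p q - 1) 0 := by
  classical
  set S := {kl : ℤ × ℤ | (segment ℝ p q ∩ tileInt a b kl.1 kl.2).Nonempty} with hS
  have hfin : S.Finite := visit_finite ha hb p q
  set k0 := ⌊min p.1 q.1 / a⌋
  set k1 := ⌈max p.1 q.1 / a⌉ - 1
  set l0 := ⌊min p.2 q.2 / b⌋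
  set l1 := ⌈max p.2 q.2 / b⌉ - 1
  have hbox := visit_subset_box ha hb p q
  have main : ∀ φ : ℤ × ℤ → ℤ, Set.InjOn φ S → (∀ kl ∈ S, φ kl ∈ Icc (k0+l0-l1+l1-(k1-k0+1)+(k1-k0+1)-1+1-1+1-1) (k1+l1)) → True := fun _ _ _ => trivial
  -- bound via injection into an Icc of length W+H-1
  have key : ∀ (lo : ℤ) (φ : ℤ × ℤ → ℤ), Set.InjOn φ S →
      (∀ kl ∈ S, φ kl ∈ Icc lo (lo + (k1 - k0) + (l1 - l0))) →
      (visitCount a b p q : ℤ) ≤ max (normWidth a p q + normHeight b p q - 1) 0 := by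
    intro lo φ hinj hmem
    have h1 : visitCount a b p q = S.ncard := rfl
    have h2 : S.ncard = (φ '' S).ncard := (Set.ncard_image_of_injOn hinj).symm
    have h3 : (φ '' S).ncard ≤ (Icc lo (lo + (k1 - k0) + (l1 - l0))).ncard := by
      apply Set.ncard_le_ncard
      · rintro x ⟨kl, hkl, rfl⟩
        exact hmem kl hkl
      · exact Set.finite_Icc _ _
    have h4 : (Icc lo (lo + (k1 - k0) + (l1 - l0))).ncard
        = ((lo + (k1 - k0) + (l1 - l0)) + 1 - lo).toNat := by
      rw [← Finset.coe_Icc, Set.ncard_coe_finset, Int.card_Icc]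
    have h5 : (visitCount a b p q : ℤ) ≤ (((lo + (k1 - k0) + (l1 - l0)) + 1 - lo).toNat : ℤ) := by
      rw [h1]
      have h5x : S.ncard <= ((lo + (k1 - k0) + (l1 - l0)) + 1 - lo).toNat := by
        rw [h2]; exact le_trans h3 (le_of_eq h4)
      exact_mod_cast h5x
    have h6 : ((((lo + (k1 - k0) + (l1 - l0)) + 1 - lo).toNat : ℤ)) =
        max ((k1 - k0) + (l1 - l0) + 1) 0 := by
      rw [Int.toNat_eq_max]; congr 1; ring
    rw [h6] at h5
    apply le_trans h5
    have hW : normWidth a p q = k1 + 1 - k0 := by simp [normWidth, k1, k0]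
    have hH : normHeight b p q = l1 + 1 - l0 := by simp [normHeight, l1, l0]
    rw [hW, hH]
    omega
  rcases le_or_gt 0 ((q.1 - p.1) * (q.2 - p.2)) with hsign | hsign
  · apply key (k0 + l0) (fun kl => kl.1 + kl.2)
    · rintro ⟨k, l⟩ hkl ⟨k', l'⟩ hkl' heq
      simp only at heq
      rcases visit_chain ha hb p q hkl hkl' hsign with ⟨h1, h2⟩ | ⟨h1, h2⟩ <;>
        · simp only [Prod.mk.injEq]; omega
    · rintro ⟨k, l⟩ hkl
      obtain ⟨⟨hk1, hk2⟩, ⟨hl1, hl2⟩⟩ := hbox hkl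
      simp only [mem_Icc]
      omega
  · apply key (k0 - l1) (fun kl => kl.1 - kl.2)
    · rintro ⟨k, l⟩ hkl ⟨k', l'⟩ hkl' heq
      simp only at heq
      rcases visit_chain_neg ha hb p q hkl hkl' (le_of_lt hsign) with ⟨h1, h2⟩ | ⟨h1, h2⟩ <;>
        · simp only [Prod.mk.injEq]; omega
    · rintro ⟨k, l⟩ hkl
      obtain ⟨⟨hk1, hk2⟩, ⟨hl1, hl2⟩⟩ := hbox hkl
      simp only [mem_Icc]
      omega

end UB2

lemma count_le (a b l : ℝ) (hb : 0 < b) (hab : b ≤ a) (hl : 0 < l) (istar jstar : ℤ)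
    (hi2 : 2 ≤ istar) (hj2 : 2 ≤ jstar)
    (hopt : ∀ m n : ℤ, 0 ≤ m → 0 ≤ n → (m:ℝ)^2*a^2 + (n:ℝ)^2*b^2 < l^2 →
      m + n ≤ (istar - 2) + (jstar - 2))
    (p q : ℝ×ℝ) (hlen : segLen p q = l) :
    (visitCount a b p q : ℤ) ≤ istar + jstar - 1 := by
  have ha : 0 < a := lt_of_lt_of_le hb hab
  have hle := visit_le ha hb p q
  set W := normWidth a p q with hWdef
  set H := normHeight b p q with hHdef
  have hsq : (p.1-q.1)^2 + (p.2-q.2)^2 = l^2 := by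
    have h0 : 0 ≤ (p.1-q.1)^2 + (p.2-q.2)^2 := by positivity
    rw [← hlen, segLen]
    exact (Real.sq_sqrt h0).symm
  obtain ⟨dx, hdxdef⟩ : ∃ dx : ℝ, dx = max p.1 q.1 - min p.1 q.1 := ⟨_, rfl⟩
  obtain ⟨dy, hdydef⟩ : ∃ dy : ℝ, dy = max p.2 q.2 - min p.2 q.2 := ⟨_, rfl⟩
  have hdx0 : 0 ≤ dx := by rw [hdxdef]; simp [min_le_max]
  have hdy0 : 0 ≤ dy := by rw [hdydef]; simp [min_le_max]
  have hdx2 : dx^2 = (p.1-q.1)^2 := by rw [hdxdef, max_sub_min_eq_abs, sq_abs]; ring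
  have hdy2 : dy^2 = (p.2-q.2)^2 := by rw [hdydef, max_sub_min_eq_abs, sq_abs]; ring
  have hsum : dx^2 + dy^2 = l^2 := by rw [hdx2, hdy2]; exact hsq
  have hWd : ((W:ℝ) - 2)*a < dx := by
    have h1 : (⌈max p.1 q.1 / a⌉ : ℝ) < max p.1 q.1 / a + 1 := Int.ceil_lt_add_one _
    have h2 : min p.1 q.1 / a - 1 < (⌊min p.1 q.1 / a⌋ : ℝ) := Int.sub_one_lt_floor _
    have h3 : (W:ℝ) < dx/a + 2 := by
      rw [hWdef, normWidth]; push_cast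
      rw [hdxdef, sub_div]
      linarith
    have h4 : ((W:ℝ) - 2) < dx/a := by linarith
    calc ((W:ℝ) - 2)*a < (dx/a)*a := mul_lt_mul_of_pos_right h4 ha
    _ = dx := by field_simp
  have hHd : ((H:ℝ) - 2)*b < dy := by
    have h1 : (⌈max p.2 q.2 / b⌉ : ℝ) < max p.2 q.2 / b + 1 := Int.ceil_lt_add_one _
    have h2 : min p.2 q.2 / b - 1 < (⌊min p.2 q.2 / b⌋ : ℝ) := Int.sub_one_lt_floor _
    have h3 : (H:ℝ) < dy/b + 2 := by
      rw [hHdef, normHeight]; push_cast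
      rw [hdydef, sub_div]
      linarith
    have h4 : ((H:ℝ) - 2) < dy/b := by linarith
    calc ((H:ℝ) - 2)*b < (dy/b)*b := mul_lt_mul_of_pos_right h4 hb
    _ = dy := by field_simp
  obtain ⟨mm, hmmdef⟩ : ∃ mm : ℤ, mm = max (W-2) 0 := ⟨_, rfl⟩
  obtain ⟨nn, hnndef⟩ : ∃ nn : ℤ, nn = max (H-2) 0 := ⟨_, rfl⟩
  have hmm0 : 0 ≤ mm := by omega
  have hnn0 : 0 ≤ nn := by omega
  have hmmR : (0:ℝ) ≤ (mm:ℝ) := by exact_mod_cast hmm0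
  have hnnR : (0:ℝ) ≤ (nn:ℝ) := by exact_mod_cast hnn0
  have hmcase : ((mm:ℝ)*a < dx) ∨ (mm = 0) := by
    rcases le_or_gt (W-2) 0 with h | h
    · right; omega
    · left
      have : mm = W - 2 := by omega
      rw [this]
      have hc : ((W - 2 : ℤ):ℝ) = (W:ℝ) - 2 := by push_cast; ring
      rw [hc]; exact hWd
  have hncase : ((nn:ℝ)*b < dy) ∨ (nn = 0) := by
    rcases le_or_gt (H-2) 0 with h | h
    · right; omega
    · left
      have : nn = H - 2 := by omega
      rw [this]
      have hc : ((H - 2 : ℤ):ℝ) = (H:ℝ) - 2 := by push_cast; ring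
      rw [hc]; exact hHd
  have hfeas : (mm:ℝ)^2*a^2 + (nn:ℝ)^2*b^2 < l^2 := by
    rcases hmcase with hm | hm <;> rcases hncase with hn | hn
    · nlinarith [mul_nonneg hmmR (le_of_lt ha), mul_nonneg hnnR (le_of_lt hb)]
    · rw [hn]; push_cast
      nlinarith [mul_nonneg hmmR (le_of_lt ha)]
    · rw [hm]; push_cast
      nlinarith [mul_nonneg hnnR (le_of_lt hb)]
    · rw [hm, hn]; push_cast
      nlinarith
  have hsumle := hopt mm nn hmm0 hnn0 hfeas
  exact le_trans hle (by omega)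


lemma floor_win {x : ℝ} {n : ℤ} (h1 : (n:ℝ) < x) (h2 : x < (n:ℝ)+1) :
    ⌊x⌋ = n ∧ ∀ j : ℤ, x ≠ (j:ℝ) := by
  constructor
  · exact Int.floor_eq_iff.mpr ⟨le_of_lt h1, by exact_mod_cast h2⟩
  · intro j hj
    rw [hj] at h1 h2
    have c1 : n < j := by exact_mod_cast h1
    have c2 : (j:ℝ) < ((n+1:ℤ):ℝ) := by push_cast; linarith
    have c3 : j < n + 1 := by exact_mod_cast c2
    omega

/-- Core case: at the infimum `ts`, `f` hits an integer `j` and `g` does not. -/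
lemma surj_case (u v f0 g0 ts : ℝ) (s j : ℤ) (hu : 0 < u) (hv : 0 < v)
    (hts0 : 0 < ts) (hts1 : ts ≤ 1)
    (hFj : f0 + ts*u = (j:ℝ))
    (hGni : ∀ i : ℤ, g0 + ts*v ≠ (i:ℝ))
    (hf1 : ∀ i : ℤ, f0 + u ≠ (i:ℝ))
    (hR : ∀ t, ts < t → t ≤ 1 → s ≤ ⌊f0 + t*u⌋ + ⌊g0 + t*v⌋)
    (hL : ∀ t, 0 ≤ t → t < ts → ⌊f0 + t*u⌋ + ⌊g0 + t*v⌋ ≤ s - 1) :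
    ∃ t ∈ Icc (0:ℝ) 1, (∀ j' : ℤ, f0 + t*u ≠ (j':ℝ)) ∧ (∀ i : ℤ, g0 + t*v ≠ (i:ℝ)) ∧
      ⌊f0 + t*u⌋ + ⌊g0 + t*v⌋ = s := by
  have htlt1 : ts < 1 := by
    rcases lt_or_eq_of_le hts1 with h | h
    · exact h
    · exfalso; apply hf1 j; rw [← hFj, h, one_mul]
  set Gv := g0 + ts*v with hGvdef
  have hGlow : (⌊Gv⌋:ℝ) < Gv := by
    rcases lt_or_eq_of_le (Int.floor_le Gv) with h | h
    · exact h
    · exfalso; exact hGni ⌊Gv⌋ h.symm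
  have hGhigh : Gv < (⌊Gv⌋:ℝ) + 1 := Int.lt_floor_add_one Gv
  -- right point
  obtain ⟨ε, hε0, hεu, hεv, hεt⟩ : ∃ ε : ℝ, 0 < ε ∧ ε*u < 1 ∧ ε*v < (⌊Gv⌋:ℝ)+1 - Gv ∧ ts + ε ≤ 1 := by
    refine ⟨min (1/(2*u)) (min (((⌊Gv⌋:ℝ)+1 - Gv)/(2*v)) (1 - ts)), ?_, ?_, ?_, ?_⟩
    · have h1 : 0 < 1/(2*u) := by positivity
      have h2 : 0 < ((⌊Gv⌋:ℝ)+1 - Gv)/(2*v) := by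
        apply div_pos (by linarith) (by positivity)
      have h3 : 0 < 1 - ts := by linarith
      simp only [lt_min_iff]; exact ⟨h1, h2, h3⟩
    · have h1 : min (1/(2*u)) (min (((⌊Gv⌋:ℝ)+1 - Gv)/(2*v)) (1 - ts)) ≤ 1/(2*u) := min_le_left _ _
      have := mul_le_mul_of_nonneg_right h1 (le_of_lt hu)
      rw [div_mul_eq_mul_div, one_mul] at this
      have h2 : u/(2*u) = 1/2 := by field_simp
      rw [h2] at this; linarith
    · have h1 : min (1/(2*u)) (min (((⌊Gv⌋:ℝ)+1 - Gv)/(2*v)) (1 - ts)) ≤ ((⌊Gv⌋:ℝ)+1 - Gv)/(2*v) :=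
        le_trans (min_le_right _ _) (min_le_left _ _)
      have := mul_le_mul_of_nonneg_right h1 (le_of_lt hv)
      have h2 : (((⌊Gv⌋:ℝ)+1 - Gv)/(2*v))*v = ((⌊Gv⌋:ℝ)+1 - Gv)/2 := by field_simp
      rw [h2] at this
      linarith
    · have h1 : min (1/(2*u)) (min (((⌊Gv⌋:ℝ)+1 - Gv)/(2*v)) (1 - ts)) ≤ 1 - ts :=
        le_trans (min_le_right _ _) (min_le_right _ _)
      linarith
  -- left point
  obtain ⟨d, hd0, hdu, hdv, hdt⟩ : ∃ d : ℝ, 0 < d ∧ d*u < 1 ∧ d*v < Gv - (⌊Gv⌋:ℝ) ∧ d ≤ ts := by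
    refine ⟨min (1/(2*u)) (min ((Gv - (⌊Gv⌋:ℝ))/(2*v)) ts), ?_, ?_, ?_, ?_⟩
    · have h1 : 0 < 1/(2*u) := by positivity
      have h2 : 0 < (Gv - (⌊Gv⌋:ℝ))/(2*v) := div_pos (by linarith) (by positivity)
      simp only [lt_min_iff]; exact ⟨h1, h2, hts0⟩
    · have h1 : min (1/(2*u)) (min ((Gv - (⌊Gv⌋:ℝ))/(2*v)) ts) ≤ 1/(2*u) := min_le_left _ _
      have := mul_le_mul_of_nonneg_right h1 (le_of_lt hu)
      rw [div_mul_eq_mul_div, one_mul] at this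
      have h2 : u/(2*u) = 1/2 := by field_simp
      rw [h2] at this; linarith
    · have h1 : min (1/(2*u)) (min ((Gv - (⌊Gv⌋:ℝ))/(2*v)) ts) ≤ (Gv - (⌊Gv⌋:ℝ))/(2*v) :=
        le_trans (min_le_right _ _) (min_le_left _ _)
      have := mul_le_mul_of_nonneg_right h1 (le_of_lt hv)
      have h2 : ((Gv - (⌊Gv⌋:ℝ))/(2*v))*v = (Gv - (⌊Gv⌋:ℝ))/2 := by field_simp
      rw [h2] at this
      linarith
    · exact le_trans (min_le_right _ _) (min_le_right _ _)
  -- floors at right point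
  have hfR : f0 + (ts+ε)*u = (j:ℝ) + ε*u := by rw [← hFj]; ring
  have hgR : g0 + (ts+ε)*v = Gv + ε*v := by rw [hGvdef]; ring
  have hfRw := floor_win (x := f0 + (ts+ε)*u) (n := j)
    (by rw [hfR]; nlinarith) (by rw [hfR]; linarith)
  have hgRw := floor_win (x := g0 + (ts+ε)*v) (n := ⌊Gv⌋)
    (by rw [hgR]; nlinarith) (by rw [hgR]; linarith)
  -- floors at left point
  have hfL : f0 + (ts-d)*u = (j:ℝ) - d*u := by rw [← hFj]; ring
  have hgL : g0 + (ts-d)*v = Gv - d*v := by rw [hGvdef]; ring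
  have hfLw := floor_win (x := f0 + (ts-d)*u) (n := j - 1)
    (by rw [hfL]; push_cast; linarith) (by rw [hfL]; push_cast; nlinarith)
  have hgLw := floor_win (x := g0 + (ts-d)*v) (n := ⌊Gv⌋)
    (by rw [hgL]; linarith) (by rw [hgL]; nlinarith)
  have hhi := hR (ts+ε) (by linarith) hεt
  have hlo := hL (ts-d) (by linarith) (by linarith)
  rw [hfRw.1, hgRw.1] at hhi
  rw [hfLw.1, hgLw.1] at hlo
  refine ⟨ts+ε, ⟨by linarith, hεt⟩, hfRw.2, hgRw.2, ?_⟩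
  rw [hfRw.1, hgRw.1]
  omega


lemma floor_surj (u v f0 g0 : ℝ) (hu : 0 < u) (hv : 0 < v)
    (hf0 : ∀ j : ℤ, f0 ≠ (j:ℝ)) (hf1 : ∀ j : ℤ, f0 + u ≠ (j:ℝ))
    (hg0 : ∀ i : ℤ, g0 ≠ (i:ℝ)) (hg1 : ∀ i : ℤ, g0 + v ≠ (i:ℝ))
    (hgen : ∀ t ∈ Icc (0:ℝ) 1,
      ¬((∃ j : ℤ, f0 + t*u = (j:ℝ)) ∧ (∃ i : ℤ, g0 + t*v = (i:ℝ))))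
    (s : ℤ) (hs0 : ⌊f0⌋ + ⌊g0⌋ ≤ s) (hs1 : s ≤ ⌊f0 + u⌋ + ⌊g0 + v⌋) :
    ∃ t ∈ Icc (0:ℝ) 1, (∀ j : ℤ, f0 + t*u ≠ (j:ℝ)) ∧ (∀ i : ℤ, g0 + t*v ≠ (i:ℝ)) ∧
      ⌊f0 + t*u⌋ + ⌊g0 + t*v⌋ = s := by
  classical
  set K := {t : ℝ | t ∈ Icc (0:ℝ) 1 ∧ s ≤ ⌊f0 + t*u⌋ + ⌊g0 + t*v⌋} with hKdef
  have hK1 : (1:ℝ) ∈ K := by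
    refine ⟨⟨zero_le_one, le_refl 1⟩, ?_⟩
    rw [one_mul, one_mul]; exact hs1
  have hKne : K.Nonempty := ⟨1, hK1⟩
  have hbdd : BddBelow K := ⟨0, fun t ht => ht.1.1⟩
  set ts := sInf K with htsdef
  have hts0 : 0 ≤ ts := le_csInf hKne (fun t ht => ht.1.1)
  have hts1 : ts ≤ 1 := csInf_le hbdd hK1
  have hmono : ∀ t t' : ℝ, t ≤ t' → ⌊f0 + t*u⌋ + ⌊g0 + t*v⌋ ≤ ⌊f0 + t'*u⌋ + ⌊g0 + t'*v⌋ := by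
    intro t t' h
    have h1 : f0 + t*u ≤ f0 + t'*u := by nlinarith
    have h2 : g0 + t*v ≤ g0 + t'*v := by nlinarith
    exact add_le_add (Int.floor_le_floor h1) (Int.floor_le_floor h2)
  have hR : ∀ t, ts < t → t ≤ 1 → s ≤ ⌊f0 + t*u⌋ + ⌊g0 + t*v⌋ := by
    intro t h1 h2
    obtain ⟨t'', ht''K, ht''lt⟩ := exists_lt_of_csInf_lt hKne h1
    exact le_trans ht''K.2 (hmono _ _ (le_of_lt ht''lt))
  have hL : ∀ t, 0 ≤ t → t < ts → ⌊f0 + t*u⌋ + ⌊g0 + t*v⌋ ≤ s - 1 := by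
    intro t h1 h2
    by_contra hcon
    push_neg at hcon
    have htK : t ∈ K := ⟨⟨h1, le_trans (le_of_lt h2) hts1⟩, by omega⟩
    have := csInf_le hbdd htK
    linarith
  rcases eq_or_lt_of_le hts0 with hts00 | htspos
  · -- ts = 0 : witness just to the right of 0
    have hf0lt : (⌊f0⌋:ℝ) < f0 := by
      rcases lt_or_eq_of_le (Int.floor_le f0) with h | h
      · exact h
      · exact absurd h.symm (hf0 ⌊f0⌋)
    have hg0lt : (⌊g0⌋:ℝ) < g0 := by
      rcases lt_or_eq_of_le (Int.floor_le g0) with h | h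
      · exact h
      · exact absurd h.symm (hg0 ⌊g0⌋)
    have hf0up : f0 < (⌊f0⌋:ℝ)+1 := Int.lt_floor_add_one f0
    have hg0up : g0 < (⌊g0⌋:ℝ)+1 := Int.lt_floor_add_one g0
    obtain ⟨ε, hε0, hεu, hεv, hεt⟩ :
        ∃ ε : ℝ, 0 < ε ∧ ε*u < (⌊f0⌋:ℝ)+1 - f0 ∧ ε*v < (⌊g0⌋:ℝ)+1 - g0 ∧ ε ≤ 1 := by
      refine ⟨min (((⌊f0⌋:ℝ)+1 - f0)/(2*u)) (min (((⌊g0⌋:ℝ)+1 - g0)/(2*v)) 1), ?_, ?_, ?_, ?_⟩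
      · simp only [lt_min_iff]
        exact ⟨div_pos (by linarith) (by positivity),
          div_pos (by linarith) (by positivity), one_pos⟩
      · have h1 : min (((⌊f0⌋:ℝ)+1 - f0)/(2*u)) (min (((⌊g0⌋:ℝ)+1 - g0)/(2*v)) 1)
            ≤ ((⌊f0⌋:ℝ)+1 - f0)/(2*u) := min_le_left _ _
        have := mul_le_mul_of_nonneg_right h1 (le_of_lt hu)
        have h2 : (((⌊f0⌋:ℝ)+1 - f0)/(2*u))*u = ((⌊f0⌋:ℝ)+1 - f0)/2 := by field_simp
        rw [h2] at this; linarith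
      · have h1 : min (((⌊f0⌋:ℝ)+1 - f0)/(2*u)) (min (((⌊g0⌋:ℝ)+1 - g0)/(2*v)) 1)
            ≤ ((⌊g0⌋:ℝ)+1 - g0)/(2*v) := le_trans (min_le_right _ _) (min_le_left _ _)
        have := mul_le_mul_of_nonneg_right h1 (le_of_lt hv)
        have h2 : (((⌊g0⌋:ℝ)+1 - g0)/(2*v))*v = ((⌊g0⌋:ℝ)+1 - g0)/2 := by field_simp
        rw [h2] at this; linarith
      · exact le_trans (min_le_right _ _) (min_le_right _ _)
    have hfw := floor_win (x := f0 + ε*u) (n := ⌊f0⌋) (by nlinarith) (by linarith)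
    have hgw := floor_win (x := g0 + ε*v) (n := ⌊g0⌋) (by nlinarith) (by linarith)
    have hhi := hR ε (by rw [← hts00] at *; exact hε0) hεt
    rw [show f0 + ε*u = f0 + ε*u from rfl] at hhi
    rw [hfw.1, hgw.1] at hhi
    refine ⟨ε, ⟨le_of_lt hε0, hεt⟩, hfw.2, hgw.2, ?_⟩
    rw [hfw.1, hgw.1]
    omega
  · -- 0 < ts
    have htsIcc : ts ∈ Icc (0:ℝ) 1 := ⟨hts0, hts1⟩
    by_cases hFint : ∃ j : ℤ, f0 + ts*u = (j:ℝ)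
    · obtain ⟨j, hj⟩ := hFint
      have hGni : ∀ i : ℤ, g0 + ts*v ≠ (i:ℝ) := by
        intro i hi
        exact hgen ts htsIcc ⟨⟨j, hj⟩, ⟨i, hi⟩⟩
      exact surj_case u v f0 g0 ts s j hu hv htspos hts1 hj hGni hf1 hR hL
    · by_cases hGint : ∃ i : ℤ, g0 + ts*v = (i:ℝ)
      · obtain ⟨i, hi⟩ := hGint
        have hFni : ∀ j : ℤ, f0 + ts*u ≠ (j:ℝ) := by
          intro j hj
          exact hFint ⟨j, hj⟩
        have hR' : ∀ t, ts < t → t ≤ 1 → s ≤ ⌊g0 + t*v⌋ + ⌊f0 + t*u⌋ := by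
          intro t h1 h2; have := hR t h1 h2; omega
        have hL' : ∀ t, 0 ≤ t → t < ts → ⌊g0 + t*v⌋ + ⌊f0 + t*u⌋ ≤ s - 1 := by
          intro t h1 h2; have := hL t h1 h2; omega
        obtain ⟨t, htIcc, hgni, hfni, hsum⟩ :=
          surj_case v u g0 f0 ts s i hv hu htspos hts1 hi hFni hg1 hR' hL'
        exact ⟨t, htIcc, hfni, hgni, by omega⟩
      · -- neither integer at ts : contradiction
        exfalso
        push_neg at hFint hGint
        have hflt : (⌊f0 + ts*u⌋:ℝ) < f0 + ts*u := by
          rcases lt_or_eq_of_le (Int.floor_le (f0 + ts*u)) with h | h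
          · exact h
          · exact absurd h.symm (hFint ⌊f0 + ts*u⌋)
        have hglt : (⌊g0 + ts*v⌋:ℝ) < g0 + ts*v := by
          rcases lt_or_eq_of_le (Int.floor_le (g0 + ts*v)) with h | h
          · exact h
          · exact absurd h.symm (hGint ⌊g0 + ts*v⌋)
        obtain ⟨d, hd0, hdu, hdv, hdt⟩ :
            ∃ d : ℝ, 0 < d ∧ d*u < f0 + ts*u - (⌊f0 + ts*u⌋:ℝ) ∧
              d*v < g0 + ts*v - (⌊g0 + ts*v⌋:ℝ) ∧ d ≤ ts := by
          refine ⟨min ((f0 + ts*u - (⌊f0 + ts*u⌋:ℝ))/(2*u))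
            (min ((g0 + ts*v - (⌊g0 + ts*v⌋:ℝ))/(2*v)) ts), ?_, ?_, ?_, ?_⟩
          · simp only [lt_min_iff]
            exact ⟨div_pos (by linarith) (by positivity),
              div_pos (by linarith) (by positivity), htspos⟩
          · have h1 : min ((f0 + ts*u - (⌊f0 + ts*u⌋:ℝ))/(2*u))
                (min ((g0 + ts*v - (⌊g0 + ts*v⌋:ℝ))/(2*v)) ts)
                ≤ (f0 + ts*u - (⌊f0 + ts*u⌋:ℝ))/(2*u) := min_le_left _ _
            have := mul_le_mul_of_nonneg_right h1 (le_of_lt hu)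
            have h2 : ((f0 + ts*u - (⌊f0 + ts*u⌋:ℝ))/(2*u))*u
                = (f0 + ts*u - (⌊f0 + ts*u⌋:ℝ))/2 := by field_simp
            rw [h2] at this; linarith
          · have h1 : min ((f0 + ts*u - (⌊f0 + ts*u⌋:ℝ))/(2*u))
                (min ((g0 + ts*v - (⌊g0 + ts*v⌋:ℝ))/(2*v)) ts)
                ≤ (g0 + ts*v - (⌊g0 + ts*v⌋:ℝ))/(2*v) :=
              le_trans (min_le_right _ _) (min_le_left _ _)
            have := mul_le_mul_of_nonneg_right h1 (le_of_lt hv)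
            have h2 : ((g0 + ts*v - (⌊g0 + ts*v⌋:ℝ))/(2*v))*v
                = (g0 + ts*v - (⌊g0 + ts*v⌋:ℝ))/2 := by field_simp
            rw [h2] at this; linarith
          · exact le_trans (min_le_right _ _) (min_le_right _ _)
        have hfL : f0 + (ts-d)*u = (f0 + ts*u) - d*u := by ring
        have hgL : g0 + (ts-d)*v = (g0 + ts*v) - d*v := by ring
        have hfLw := floor_win (x := f0 + (ts-d)*u) (n := ⌊f0 + ts*u⌋)
          (by rw [hfL]; linarith)
          (by rw [hfL]; nlinarith [Int.lt_floor_add_one (f0 + ts*u)])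
        have hgLw := floor_win (x := g0 + (ts-d)*v) (n := ⌊g0 + ts*v⌋)
          (by rw [hgL]; linarith)
          (by rw [hgL]; nlinarith [Int.lt_floor_add_one (g0 + ts*v)])
        have hlo := hL (ts-d) (by linarith) (by linarith)
        rw [hfLw.1, hgLw.1] at hlo
        -- now show s ≤ h ts
        have hhits : s ≤ ⌊f0 + ts*u⌋ + ⌊g0 + ts*v⌋ := by
          rcases lt_or_eq_of_le hts1 with h | h
          · -- pick right point with same floors
            have hfup : f0 + ts*u < (⌊f0 + ts*u⌋:ℝ)+1 := Int.lt_floor_add_one _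
            have hgup : g0 + ts*v < (⌊g0 + ts*v⌋:ℝ)+1 := Int.lt_floor_add_one _
            obtain ⟨ε, hε0, hεu, hεv, hεt⟩ :
                ∃ ε : ℝ, 0 < ε ∧ ε*u < (⌊f0 + ts*u⌋:ℝ)+1 - (f0 + ts*u) ∧
                  ε*v < (⌊g0 + ts*v⌋:ℝ)+1 - (g0 + ts*v) ∧ ts + ε ≤ 1 := by
              refine ⟨min (((⌊f0 + ts*u⌋:ℝ)+1 - (f0 + ts*u))/(2*u))
                (min (((⌊g0 + ts*v⌋:ℝ)+1 - (g0 + ts*v))/(2*v)) (1-ts)), ?_, ?_, ?_, ?_⟩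
              · simp only [lt_min_iff]
                exact ⟨div_pos (by linarith) (by positivity),
                  div_pos (by linarith) (by positivity), by linarith⟩
              · have h1 : min (((⌊f0 + ts*u⌋:ℝ)+1 - (f0 + ts*u))/(2*u))
                    (min (((⌊g0 + ts*v⌋:ℝ)+1 - (g0 + ts*v))/(2*v)) (1-ts))
                    ≤ ((⌊f0 + ts*u⌋:ℝ)+1 - (f0 + ts*u))/(2*u) := min_le_left _ _
                have := mul_le_mul_of_nonneg_right h1 (le_of_lt hu)
                have h2 : (((⌊f0 + ts*u⌋:ℝ)+1 - (f0 + ts*u))/(2*u))*u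
                    = (((⌊f0 + ts*u⌋:ℝ)+1 - (f0 + ts*u)))/2 := by field_simp
                rw [h2] at this; linarith
              · have h1 : min (((⌊f0 + ts*u⌋:ℝ)+1 - (f0 + ts*u))/(2*u))
                    (min (((⌊g0 + ts*v⌋:ℝ)+1 - (g0 + ts*v))/(2*v)) (1-ts))
                    ≤ ((⌊g0 + ts*v⌋:ℝ)+1 - (g0 + ts*v))/(2*v) :=
                  le_trans (min_le_right _ _) (min_le_left _ _)
                have := mul_le_mul_of_nonneg_right h1 (le_of_lt hv)
                have h2 : (((⌊g0 + ts*v⌋:ℝ)+1 - (g0 + ts*v))/(2*v))*v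
                    = (((⌊g0 + ts*v⌋:ℝ)+1 - (g0 + ts*v)))/2 := by field_simp
                rw [h2] at this; linarith
              · have h1 : min (((⌊f0 + ts*u⌋:ℝ)+1 - (f0 + ts*u))/(2*u))
                    (min (((⌊g0 + ts*v⌋:ℝ)+1 - (g0 + ts*v))/(2*v)) (1-ts)) ≤ 1-ts :=
                  le_trans (min_le_right _ _) (min_le_right _ _)
                linarith
            have hfR : f0 + (ts+ε)*u = (f0 + ts*u) + ε*u := by ring
            have hgR : g0 + (ts+ε)*v = (g0 + ts*v) + ε*v := by ring
            have hfRw := floor_win (x := f0 + (ts+ε)*u) (n := ⌊f0 + ts*u⌋)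
              (by rw [hfR]; nlinarith) (by rw [hfR]; linarith)
            have hgRw := floor_win (x := g0 + (ts+ε)*v) (n := ⌊g0 + ts*v⌋)
              (by rw [hgR]; nlinarith) (by rw [hgR]; linarith)
            have hhi := hR (ts+ε) (by linarith) hεt
            rw [hfRw.1, hgRw.1] at hhi
            exact hhi
          · -- ts = 1
            have := hs1
            rw [show f0 + u = f0 + ts*u by rw [h]; ring,
              show g0 + v = g0 + ts*v by rw [h]; ring] at this
            exact this
        omega


lemma exists_avoid (B : Set ℝ) (hB : B.Countable) (e : ℝ) (he : 0 < e) :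
    ∃ x, x ∈ Ioo 0 e ∧ x ∉ B := by
  by_contra h
  push_neg at h
  have hsub : Ioo (0:ℝ) e ⊆ B := fun x hx => h x hx
  have hm := MeasureTheory.measure_mono (μ := MeasureTheory.volume) hsub
  rw [Set.Countable.measure_zero hB, Real.volume_Ioo] at hm
  simp only [nonpos_iff_eq_zero, ENNReal.ofReal_eq_zero] at hm
  linarith

set_option maxHeartbeats 1000000 in
lemma count_ge (a b l : ℝ) (hb : 0 < b) (hab : b ≤ a) (hl : 0 < l)
    (istar jstar : ℤ) (hi2 : 2 ≤ istar) (hj2 : 2 ≤ jstar)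
    (hfeasB : ((istar:ℝ)-2)^2*a^2 + ((jstar:ℝ)-2)^2*b^2 < l^2) :
    ∃ p q : ℝ×ℝ, segLen p q = l ∧ (istar + jstar - 1 : ℤ) ≤ (visitCount a b p q : ℤ) := by
  classical
  have ha : 0 < a := lt_of_lt_of_le hb hab
  obtain ⟨M, hMdef⟩ : ∃ M:ℝ, M = (istar:ℝ) - 2 := ⟨_, rfl⟩
  obtain ⟨N, hNdef⟩ : ∃ N:ℝ, N = (jstar:ℝ) - 2 := ⟨_, rfl⟩
  have hM0 : (0:ℝ) ≤ M := by
    have h : ((2:ℤ):ℝ) ≤ (istar:ℝ) := by exact_mod_cast hi2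
    push_cast at h; rw [hMdef]; linarith
  have hN0 : (0:ℝ) ≤ N := by
    have h : ((2:ℤ):ℝ) ≤ (jstar:ℝ) := by exact_mod_cast hj2
    push_cast at h; rw [hNdef]; linarith
  obtain ⟨D, hDdef⟩ : ∃ D:ℝ, D = l^2 - M^2*a^2 - N^2*b^2 := ⟨_, rfl⟩
  have hD : 0 < D := by rw [hDdef, hMdef, hNdef]; linarith [hfeasB]
  have hMa2 : (0:ℝ) ≤ M^2*a^2 := by positivity
  have hNb2 : (0:ℝ) ≤ N^2*b^2 := by positivity
  obtain ⟨dx, hdxdef⟩ : ∃ dx:ℝ, dx = Real.sqrt (M^2*a^2 + D/2) := ⟨_, rfl⟩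
  obtain ⟨dy, hdydef⟩ : ∃ dy:ℝ, dy = Real.sqrt (N^2*b^2 + D/2) := ⟨_, rfl⟩
  have hdx2 : dx^2 = M^2*a^2 + D/2 := by
    rw [hdxdef]; exact Real.sq_sqrt (by linarith)
  have hdy2 : dy^2 = N^2*b^2 + D/2 := by
    rw [hdydef]; exact Real.sq_sqrt (by linarith)
  have hdx0 : 0 ≤ dx := by rw [hdxdef]; exact Real.sqrt_nonneg _
  have hdy0 : 0 ≤ dy := by rw [hdydef]; exact Real.sqrt_nonneg _
  have hdxM : M*a < dx := by
    apply sq_lt_sq_nonneg' hdx0 (by positivity)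
    rw [hdx2]; nlinarith
  have hdyN : N*b < dy := by
    apply sq_lt_sq_nonneg' hdy0 (by positivity)
    rw [hdy2]; nlinarith
  have hdxpos : 0 < dx := lt_of_le_of_lt (by positivity : (0:ℝ) ≤ M*a) hdxM
  have hdypos : 0 < dy := lt_of_le_of_lt (by positivity : (0:ℝ) ≤ N*b) hdyN
  have hsum : dx^2 + dy^2 = l^2 := by rw [hdx2, hdy2, hDdef]; ring
  obtain ⟨u, hudef⟩ : ∃ u:ℝ, u = dx/a := ⟨_, rfl⟩
  obtain ⟨v, hvdef⟩ : ∃ v:ℝ, v = dy/b := ⟨_, rfl⟩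
  have hu : 0 < u := by rw [hudef]; exact div_pos hdxpos ha
  have hv : 0 < v := by rw [hvdef]; exact div_pos hdypos hb
  have hMu : M < u := by
    rw [hudef, lt_div_iff₀ ha]; exact hdxM
  have hNv : N < v := by
    rw [hvdef, lt_div_iff₀ hb]; exact hdyN
  -- choose δ
  obtain ⟨δ, hδIoo, hδB⟩ := exists_avoid (⋃ j : ℤ, {u - (j:ℝ)})
    (Set.countable_iUnion (fun _ => Set.countable_singleton _))
    (min (u - M) 1) (by simp only [lt_min_iff]; exact ⟨by linarith, one_pos⟩)
  obtain ⟨hδ0, hδlt⟩ := hδIoo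
  have hδ1 : δ < 1 := lt_of_lt_of_le hδlt (min_le_right _ _)
  have hδuM : δ < u - M := lt_of_lt_of_le hδlt (min_le_left _ _)
  -- choose η
  obtain ⟨η, hηIoo, hηB⟩ := exists_avoid
    ((⋃ i : ℤ, {v - (i:ℝ)}) ∪ (⋃ ji : ℤ×ℤ, {v*((ji.1:ℝ)+δ)/u - (ji.2:ℝ)}))
    (Set.Countable.union (Set.countable_iUnion (fun _ => Set.countable_singleton _))
      (Set.countable_iUnion (fun _ => Set.countable_singleton _)))
    (min (v - N) 1) (by simp only [lt_min_iff]; exact ⟨by linarith, one_pos⟩)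
  obtain ⟨hη0, hηlt⟩ := hηIoo
  have hη1 : η < 1 := lt_of_lt_of_le hηlt (min_le_right _ _)
  have hηvN : η < v - N := lt_of_lt_of_le hηlt (min_le_left _ _)
  -- the segment
  obtain ⟨p, hpdef⟩ : ∃ p : ℝ×ℝ, p = ((-δ)*a, (-η)*b) := ⟨_, rfl⟩
  obtain ⟨q, hqdef⟩ : ∃ q : ℝ×ℝ, q = ((-δ+u)*a, (-η+v)*b) := ⟨_, rfl⟩
  have hp1 : p.1 = (-δ)*a := by rw [hpdef]
  have hp2 : p.2 = (-η)*b := by rw [hpdef]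
  have hq1 : q.1 = (-δ+u)*a := by rw [hqdef]
  have hq2 : q.2 = (-η+v)*b := by rw [hqdef]
  have hd1 : q.1 - p.1 = u*a := by rw [hp1, hq1]; ring
  have hd2 : q.2 - p.2 = v*b := by rw [hp2, hq2]; ring
  have hua : u*a = dx := by rw [hudef]; field_simp
  have hvb : v*b = dy := by rw [hvdef]; field_simp
  have hlen : segLen p q = l := by
    rw [segLen]
    have e1 : (p.1 - q.1)^2 = dx^2 := by
      rw [show p.1 - q.1 = -(q.1 - p.1) by ring, hd1, hua]; ring
    have e2 : (p.2 - q.2)^2 = dy^2 := by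
      rw [show p.2 - q.2 = -(q.2 - p.2) by ring, hd2, hvb]; ring
    rw [e1, e2, hsum]
    exact Real.sqrt_sq (le_of_lt hl)
  refine ⟨p, q, hlen, ?_⟩
  -- floor functions basic facts
  have hf0w := floor_win (x := -δ) (n := -1) (by push_cast; linarith) (by push_cast; linarith)
  have hg0w := floor_win (x := -η) (n := -1) (by push_cast; linarith) (by push_cast; linarith)
  have hf1ni : ∀ j : ℤ, -δ + u ≠ (j:ℝ) := by
    intro j hj
    apply hδB
    apply Set.mem_iUnion.mpr ⟨j, ?_⟩
    simp only [mem_singleton_iff]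
    linarith
  have hg1ni : ∀ i : ℤ, -η + v ≠ (i:ℝ) := by
    intro i hi
    apply hηB
    apply Set.mem_union_left
    apply Set.mem_iUnion.mpr ⟨i, ?_⟩
    simp only [mem_singleton_iff]
    linarith
  have hgen : ∀ t ∈ Icc (0:ℝ) 1,
      ¬((∃ j : ℤ, -δ + t*u = (j:ℝ)) ∧ (∃ i : ℤ, -η + t*v = (i:ℝ))) := by
    rintro t _ ⟨⟨j, hj⟩, ⟨i, hi⟩⟩
    apply hηB
    apply Set.mem_union_right
    apply Set.mem_iUnion.mpr ⟨(j, i), ?_⟩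
    simp only [mem_singleton_iff]
    have ht : t = ((j:ℝ)+δ)/u := by
      field_simp
      linarith
    rw [← hi, ht]
    ring
  have hf1M : istar - 2 ≤ ⌊-δ + u⌋ := by
    apply Int.le_floor.mpr
    have : ((istar - 2 : ℤ):ℝ) = M := by rw [hMdef]; push_cast; ring
    rw [this]
    linarith
  have hg1N : jstar - 2 ≤ ⌊-η + v⌋ := by
    apply Int.le_floor.mpr
    have : ((jstar - 2 : ℤ):ℝ) = N := by rw [hNdef]; push_cast; ring
    rw [this]
    linarith
  -- counting
  have hfin := visit_finite ha hb p q
  obtain ⟨Mx, hMxdef⟩ : ∃ Mx:ℤ, Mx = ⌊-δ + u⌋ + ⌊-η + v⌋ := ⟨_, rfl⟩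
  have hsub : Finset.Icc (-2 : ℤ) Mx ⊆
      hfin.toFinset.image (fun kl : ℤ×ℤ => kl.1 + kl.2) := by
    intro s hs
    rw [Finset.mem_Icc] at hs
    obtain ⟨t, htIcc, hfni, hgni, hsum'⟩ := floor_surj u v (-δ) (-η) hu hv
      hf0w.2 hf1ni hg0w.2 hg1ni hgen s
      (by rw [hf0w.1, hg0w.1]; omega) (by rw [← hMxdef]; exact hs.2)
    apply Finset.mem_image.mpr
    refine ⟨(⌊-δ + t*u⌋, ⌊-η + t*v⌋), ?_, hsum'⟩
    rw [Set.Finite.mem_toFinset]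
    refine ⟨p + t • (q - p), ?_, ?_⟩
    · rw [segment_eq_image' ℝ p q]
      exact ⟨t, htIcc, rfl⟩
    · have hz1 : (p + t • (q - p)).1 = (-δ + t*u)*a := by
        simp only [Prod.fst_add, Prod.fst_sub, Prod.smul_fst, smul_eq_mul]
        rw [hp1, hq1]; ring
      have hz2 : (p + t • (q - p)).2 = (-η + t*v)*b := by
        simp only [Prod.snd_add, Prod.snd_sub, Prod.smul_snd, smul_eq_mul]
        rw [hp2, hq2]; ring
      have hflow : (⌊-δ + t*u⌋:ℝ) < -δ + t*u := by
        rcases lt_or_eq_of_le (Int.floor_le (-δ + t*u)) with h | h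
        · exact h
        · exact absurd h.symm (hfni ⌊-δ + t*u⌋)
      have hglow : (⌊-η + t*v⌋:ℝ) < -η + t*v := by
        rcases lt_or_eq_of_le (Int.floor_le (-η + t*v)) with h | h
        · exact h
        · exact absurd h.symm (hgni ⌊-η + t*v⌋)
      have hfhigh : -δ + t*u < (⌊-δ + t*u⌋:ℝ) + 1 := Int.lt_floor_add_one _
      have hghigh : -η + t*v < (⌊-η + t*v⌋:ℝ) + 1 := Int.lt_floor_add_one _
      constructor
      · rw [hz1]
        constructor
        · exact mul_lt_mul_of_pos_right hflow ha
        · exact mul_lt_mul_of_pos_right hfhigh ha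
      · rw [hz2]
        constructor
        · exact mul_lt_mul_of_pos_right hglow hb
        · exact mul_lt_mul_of_pos_right hghigh hb
  have hcard1 : (Finset.Icc (-2 : ℤ) Mx).card = (Mx + 3).toNat := by
    rw [Int.card_Icc]
    congr 1
    omega
  have hcard2 : (Finset.Icc (-2 : ℤ) Mx).card ≤ visitCount a b p q := by
    calc (Finset.Icc (-2 : ℤ) Mx).card
        ≤ (hfin.toFinset.image (fun kl : ℤ×ℤ => kl.1 + kl.2)).card :=
          Finset.card_le_card hsub
      _ ≤ hfin.toFinset.card := Finset.card_image_le
      _ = visitCount a b p q := by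
          rw [visitCount, Set.ncard_eq_toFinset_card _ hfin]
  have hMx : istar + jstar - 4 ≤ Mx := by omega
  have hfinal : ((Mx + 3).toNat : ℤ) ≤ (visitCount a b p q : ℤ) := by
    rw [← hcard1]
    exact_mod_cast hcard2
  have : ((Mx + 3).toNat : ℤ) = Mx + 3 := Int.toNat_of_nonneg (by omega)
  omega

set_option maxHeartbeats 1000000 in
theorem stmt_7 (a b ℓ : ℝ) (hb : 0 < b) (hab : b ≤ a) (hℓ : 0 < ℓ)
    (istar jstar : ℤ)
    (histar : istar =
      ⌈(3 : ℝ) / 2 + (b / a) * Real.sqrt (max (ℓ ^ 2 / (a ^ 2 + b ^ 2) - 1 / 4) 0)⌉)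
    (hjstar : jstar =
      ⌈(1 : ℝ) + Real.sqrt (ℓ ^ 2 - ((istar : ℝ) - 2) ^ 2 * a ^ 2) / b⌉) :
    (maxTiles a b ℓ : ℤ) = istar + jstar - 1 := by
  obtain ⟨hi2, hj2, hfeasB, hopt⟩ := arith_main a b ℓ hb hab hℓ istar jstar histar hjstar
  obtain ⟨p₀, q₀, hlen₀, hge₀⟩ := count_ge a b ℓ hb hab hℓ istar jstar hi2 hj2 hfeasB
  obtain ⟨Nn, hNndef⟩ : ∃ Nn : ℕ, Nn = (istar + jstar - 1).toNat := ⟨_, rfl⟩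
  have hNncast : (Nn:ℤ) = istar + jstar - 1 := by
    rw [hNndef]; exact Int.toNat_of_nonneg (by omega)
  have hub : ∀ n ∈ {n : ℕ | ∃ p q : ℝ × ℝ, segLen p q = ℓ ∧ visitCount a b p q = n}, n ≤ Nn := by
    rintro n ⟨p, q, hlen, rfl⟩
    have h := count_le a b ℓ hb hab hℓ istar jstar hi2 hj2 hopt p q hlen
    rw [← hNncast] at h
    exact_mod_cast h
  have hmem : Nn ∈ {n : ℕ | ∃ p q : ℝ × ℝ, segLen p q = ℓ ∧ visitCount a b p q = n} := by
    refine ⟨p₀, q₀, hlen₀, ?_⟩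
    have hle : (visitCount a b p₀ q₀ : ℤ) ≤ istar + jstar - 1 :=
      count_le a b ℓ hb hab hℓ istar jstar hi2 hj2 hopt p₀ q₀ hlen₀
    have : (visitCount a b p₀ q₀ : ℤ) = (Nn:ℤ) := by omega
    exact_mod_cast this
  have hsup : maxTiles a b ℓ = Nn := by
    rw [maxTiles]
    apply le_antisymm
    · exact csSup_le ⟨Nn, hmem⟩ hub
    · exact le_csSup ⟨Nn, hub⟩ hmem
  rw [hsup, hNncast]
end
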